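/- arXiv:math/0310396 — 8 statements merged into one kernel-verified Lean document; each statement's English description precedes it below -/
import Mathlib

section
/- Let I0, I1, I2 be ideals of homogeneous polynomials, let n ≥ 1, and suppose P_{I0}(^nE;F) ∩ P_{I1}(^nE;F) ⊆ P_{I2}(^nE;F). Assume: (i) for every P ∈ P_{I2}(^nE;F) and every fixed a ∈ E, the linear map x ↦ P̌(x,a,...,a) belongs to L_{I2}(E;F), where P̌ is the symmetric n-linear map associated to P; (ii) for j = 0,1 and each m < n, if P ∈ P_{I_j}(^mE;F) and φ ∈ E', then the polynomial x ↦ φ(x)·P(x) belongs to P_{I_j}(^{m+1}E;F). Then L_{I0}(E;F) ∩ L_{I1}(E;F) ⊆ L_{I2}(E;F). -/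
/-- A continuous multilinear map is symmetric. -/
def IsSymMap {𝕜 E F : Type} [RCLike 𝕜] [NormedAddCommGroup E] [NormedSpace 𝕜 E]
    [NormedAddCommGroup F] [NormedSpace 𝕜 F] (m : ℕ)
    (T : ContinuousMultilinearMap 𝕜 (fun _ : Fin m => E) F) : Prop :=
  ∀ (σ : Equiv.Perm (Fin m)) (x : Fin m → E), T (x ∘ σ) = T x


open Finset in
/-- The `n`-multilinear map `(x_1,…,x_n) ↦ (∏_{j ≠ i} φ(x_j)) • T(x_i)`. -/
def projMap {𝕜 E F : Type} [RCLike 𝕜] [NormedAddCommGroup E] [NormedSpace 𝕜 E]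
    [NormedAddCommGroup F] [NormedSpace 𝕜 F] (n : ℕ) (φ : E →L[𝕜] 𝕜) (T : E →L[𝕜] F)
    (i : Fin n) : ContinuousMultilinearMap 𝕜 (fun _ : Fin n => E) F where
  toMultilinearMap :=
  { toFun := fun x => (∏ j ∈ univ.erase i, φ (x j)) • T (x i)
    map_update_add' := by
      intro inst x j a b
      obtain rfl := Subsingleton.elim inst (instDecidableEqFin n)
      have hupd : ∀ (v : E) (s : Finset (Fin n)), j ∉ s →
          ∏ k ∈ s, φ (Function.update x j v k) = ∏ k ∈ s, φ (x k) := fun v s hj =>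
        Finset.prod_congr rfl fun k hk => by
          rw [Function.update_of_ne (by rintro rfl; exact hj hk)]
      rcases eq_or_ne j i with rfl | hji
      · rw [hupd _ _ (notMem_erase j univ), hupd _ _ (notMem_erase j univ),
          hupd _ _ (notMem_erase j univ), Function.update_self, Function.update_self,
          Function.update_self, map_add, smul_add]
      · have hj : j ∈ univ.erase i := mem_erase.2 ⟨hji, mem_univ j⟩
        rw [Function.update_of_ne hji.symm, Function.update_of_ne hji.symm,
          Function.update_of_ne hji.symm,
          ← Finset.mul_prod_erase _ _ hj, ← Finset.mul_prod_erase _ _ hj,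
          ← Finset.mul_prod_erase _ _ hj,
          hupd _ _ (notMem_erase j _), hupd _ _ (notMem_erase j _),
          hupd _ _ (notMem_erase j _), Function.update_self, Function.update_self,
          Function.update_self, map_add, add_mul, add_smul]
    map_update_smul' := by
      intro inst x j c a
      obtain rfl := Subsingleton.elim inst (instDecidableEqFin n)
      have hupd : ∀ (v : E) (s : Finset (Fin n)), j ∉ s →
          ∏ k ∈ s, φ (Function.update x j v k) = ∏ k ∈ s, φ (x k) := fun v s hj =>
        Finset.prod_congr rfl fun k hk => by
          rw [Function.update_of_ne (by rintro rfl; exact hj hk)]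
      rcases eq_or_ne j i with rfl | hji
      · rw [hupd _ _ (notMem_erase j univ), hupd _ _ (notMem_erase j univ),
          Function.update_self, Function.update_self, map_smul, smul_comm]
      · have hj : j ∈ univ.erase i := mem_erase.2 ⟨hji, mem_univ j⟩
        rw [Function.update_of_ne hji.symm, Function.update_of_ne hji.symm,
          ← Finset.mul_prod_erase _ _ hj, ← Finset.mul_prod_erase _ _ hj,
          hupd _ _ (notMem_erase j _), hupd _ _ (notMem_erase j _),
          Function.update_self, Function.update_self,
          map_smul, smul_eq_mul, mul_assoc, mul_smul] }
  cont :=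
    (continuous_finset_prod _ fun j _ =>
      φ.continuous.comp (continuous_apply j)).smul (T.continuous.comp (continuous_apply i))

open Finset in
lemma projMap_apply {𝕜 E F : Type} [RCLike 𝕜] [NormedAddCommGroup E] [NormedSpace 𝕜 E]
    [NormedAddCommGroup F] [NormedSpace 𝕜 F] (n : ℕ) (φ : E →L[𝕜] 𝕜) (T : E →L[𝕜] F)
    (i : Fin n) (x : Fin n → E) :
    projMap n φ T i x = (∏ j ∈ univ.erase i, φ (x j)) • T (x i) := rfl


/-- Lemma 2 of the paper: if `P_{I0}(^nE;F) ∩ P_{I1}(^nE;F) ⊆ P_{I2}(^nE;F)`, if the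
symmetric multilinear map of any polynomial of `I2` linearizes (fixing `a` in all slots but
one) into `L_{I2}(E;F)`, and if `I0`, `I1` are stable under multiplication by a linear
functional (in degrees below `n`), then `L_{I0}(E;F) ∩ L_{I1}(E;F) ⊆ L_{I2}(E;F)`.
The degree-`k` component of an ideal is encoded as a set `I k` of maps `E → F`; the ideal
properties of `I2` in degree 1 (it is a subspace containing the rank-one operators) are
explicit hypotheses. -/
theorem linear_inclusion_of_poly_inclusion {𝕜 E F : Type} [RCLike 𝕜]
    [NormedAddCommGroup E] [NormedSpace 𝕜 E] [CompleteSpace E]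
    [NormedAddCommGroup F] [NormedSpace 𝕜 F] [CompleteSpace F]
    (I0 I1 I2 : ℕ → Set (E → F)) (n : ℕ) (hn : 1 ≤ n)
    (hsub : ∀ P : E → F, P ∈ I0 n → P ∈ I1 n → P ∈ I2 n)
    (hi : ∀ T : ContinuousMultilinearMap 𝕜 (fun _ : Fin n => E) F, IsSymMap n T →
        (fun x => T fun _ => x) ∈ I2 n →
        ∀ a : E, (fun x => T fun i => if (i : ℕ) = 0 then x else a) ∈ I2 1)
    (hii0 : ∀ m : ℕ, m < n → ∀ P ∈ I0 m, ∀ φ : E →L[𝕜] 𝕜,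
        (fun x => φ x • P x) ∈ I0 (m + 1))
    (hii1 : ∀ m : ℕ, m < n → ∀ P ∈ I1 m, ∀ φ : E →L[𝕜] 𝕜,
        (fun x => φ x • P x) ∈ I1 (m + 1))
    (hrank : ∀ (ψ : E →L[𝕜] 𝕜) (y : F), (fun x => ψ x • y) ∈ I2 1)
    (hlin : ∀ f g : E → F, f ∈ I2 1 → g ∈ I2 1 → ∀ c d : 𝕜,
        (fun x => c • f x + d • g x) ∈ I2 1) :
    ∀ T : E →L[𝕜] F, ⇑T ∈ I0 1 → ⇑T ∈ I1 1 → ⇑T ∈ I2 1 := by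
  classical
  intro T hT0 hT1
  by_cases hE : ∃ a : E, a ≠ 0
  case neg =>
    -- `E` is trivial, so `T` coincides with a rank-one operator.
    push_neg at hE
    have hz : ⇑T = fun x => (0 : E →L[𝕜] 𝕜) x • (0 : F) := by
      funext x
      simp [hE x]
    rw [hz]
    exact hrank 0 0
  case pos =>
  obtain ⟨a, ha⟩ := hE
  obtain ⟨φ, hφ⟩ := SeparatingDual.exists_eq_one (R := 𝕜) ha
  set S : ContinuousMultilinearMap 𝕜 (fun _ : Fin n => E) F :=
    ∑ i : Fin n, projMap n φ T i with hSdef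
  -- membership of the diagonal polynomial in `I0 n` and `I1 n`
  have chain : ∀ I : ℕ → Set (E → F),
      (∀ m : ℕ, m < n → ∀ P ∈ I m, ∀ ψ : E →L[𝕜] 𝕜, (fun x => ψ x • P x) ∈ I (m + 1)) →
      ⇑T ∈ I 1 → (fun x => ((n : 𝕜) * φ x ^ (n - 1)) • T x) ∈ I n := by
    intro I hii hT
    rcases Nat.lt_or_ge n 2 with h2 | h2
    · have hn1 : n = 1 := by omega
      subst hn1
      have e : (fun x => ((1 : ℕ) * φ x ^ (1 - 1) : 𝕜) • T x) = ⇑T := by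
        funext x; simp
      rw [show ((1:ℕ) - 1) = 0 from rfl] at e ⊢
      rw [e]
      exact hT
    · have key : ∀ k, k + 2 ≤ n → (fun x => ((n : 𝕜) * φ x ^ (k + 1)) • T x) ∈ I (k + 2) := by
        intro k
        induction k with
        | zero =>
          intro hk
          have h1 := hii 1 (by omega) _ hT ((n : 𝕜) • φ)
          have e : (fun x => ((n : 𝕜) • φ) x • T x) =
              fun x => ((n : 𝕜) * φ x ^ (0 + 1)) • T x := by
            funext x
            simp [smul_eq_mul]
          rw [e] at h1
          exact h1
        | succ k ih =>
          intro hk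
          have h1 := hii (k + 2) (by omega) _ (ih (by omega)) φ
          have e : (fun x => φ x • ((n : 𝕜) * φ x ^ (k + 1)) • T x) =
              fun x => ((n : 𝕜) * φ x ^ (k + 1 + 1)) • T x := by
            funext x
            rw [smul_smul]
            ring_nf
          rw [e] at h1
          exact h1
      have h := key (n - 2) (by omega)
      rw [show n - 2 + 1 = n - 1 from by omega, show n - 2 + 2 = n from by omega] at h
      exact h
  -- diagonal of `S`
  have hdiagS : ∀ x : E, (S fun _ => x) = ((n : 𝕜) * φ x ^ (n - 1)) • T x := by
    intro x
    rw [hSdef, ContinuousMultilinearMap.sum_apply]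
    have e : ∀ i : Fin n, projMap n φ T i (fun _ => x) = (φ x ^ (n - 1)) • T x := by
      intro i
      rw [projMap_apply, Finset.prod_const, Finset.card_erase_of_mem (Finset.mem_univ i),
        Finset.card_univ, Fintype.card_fin]
    rw [Finset.sum_congr rfl fun i _ => e i, Finset.sum_const, Finset.card_univ,
      Fintype.card_fin, ← Nat.cast_smul_eq_nsmul 𝕜, smul_smul]
  have hdiag : (fun x => S fun _ => x) ∈ I2 n := by
    have h := hsub _ (chain I0 hii0 hT0) (chain I1 hii1 hT1)
    have e : (fun x => S fun _ => x) = fun x => ((n : 𝕜) * φ x ^ (n - 1)) • T x :=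
      funext fun x => hdiagS x
    rw [e]
    exact h
  -- symmetry of `S`
  have hsym : IsSymMap n S := by
    intro σ x
    rw [hSdef, ContinuousMultilinearMap.sum_apply, ContinuousMultilinearMap.sum_apply]
    rw [← Equiv.sum_comp σ fun i => projMap n φ T i x]
    refine Finset.sum_congr rfl fun i _ => ?_
    rw [projMap_apply, projMap_apply]
    have hprod : ∏ j ∈ Finset.univ.erase i, φ (x (σ j)) =
        ∏ j ∈ Finset.univ.erase (σ i), φ (x j) := by
      rw [show Finset.univ.erase (σ i) = (Finset.univ.erase i).map σ.toEmbedding from ?_,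
        Finset.prod_map]
      · rfl
      · ext k
        simp only [Finset.mem_map, Finset.mem_erase, Finset.mem_univ, and_true,
          Equiv.coe_toEmbedding]
        constructor
        · intro hk
          exact ⟨σ.symm k, fun h => hk (by rw [← Equiv.apply_symm_apply σ k, h]),
            Equiv.apply_symm_apply σ k⟩
        · rintro ⟨b, hbi, rfl⟩
          exact fun h => hbi (σ.injective h)
    simp only [Function.comp_apply]
    rw [hprod]
  -- linearization via hypothesis (i)
  have hL := hi S hsym hdiag a
  -- compute the linearized map
  have i0 : Fin n := ⟨0, hn⟩
  have heval : (fun x => S fun i => if (i : ℕ) = 0 then x else a) =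
      fun x => T x + (((n - 1 : ℕ) : 𝕜)) • (φ x • T a) := by
    funext x
    set v : Fin n → E := fun i => if (i : ℕ) = 0 then x else a with hv
    have hv0 : v ⟨0, hn⟩ = x := by simp [hv]
    have hvne : ∀ j : Fin n, j ≠ ⟨0, hn⟩ → v j = a := by
      intro j hj
      have : (j : ℕ) ≠ 0 := fun h => hj (Fin.ext h)
      simp [hv, this]
    rw [hSdef, ContinuousMultilinearMap.sum_apply,
      ← Finset.add_sum_erase _ _ (Finset.mem_univ (⟨0, hn⟩ : Fin n))]
    have hterm0 : projMap n φ T (⟨0, hn⟩ : Fin n) v = T x := by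
      rw [projMap_apply, hv0]
      have : ∏ j ∈ Finset.univ.erase (⟨0, hn⟩ : Fin n), φ (v j) = 1 := by
        refine Finset.prod_eq_one fun j hj => ?_
        rw [hvne j (Finset.mem_erase.1 hj).1, hφ]
      rw [this, one_smul]
    have hterm : ∀ i ∈ Finset.univ.erase (⟨0, hn⟩ : Fin n),
        projMap n φ T i v = φ x • T a := by
      intro i hi'
      have hine : i ≠ (⟨0, hn⟩ : Fin n) := (Finset.mem_erase.1 hi').1
      rw [projMap_apply, hvne i hine]
      have h0mem : (⟨0, hn⟩ : Fin n) ∈ Finset.univ.erase i :=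
        Finset.mem_erase.2 ⟨fun h => hine h.symm, Finset.mem_univ _⟩
      rw [← Finset.mul_prod_erase _ _ h0mem, hv0]
      have : ∏ j ∈ (Finset.univ.erase i).erase (⟨0, hn⟩ : Fin n), φ (v j) = 1 := by
        refine Finset.prod_eq_one fun j hj => ?_
        rw [hvne j (Finset.mem_erase.1 hj).1, hφ]
      rw [this, mul_one]
    rw [hterm0, Finset.sum_congr rfl hterm, Finset.sum_const,
      Finset.card_erase_of_mem (Finset.mem_univ _), Finset.card_univ, Fintype.card_fin,
      ← Nat.cast_smul_eq_nsmul 𝕜]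
  rw [heval] at hL
  have hfinal := hlin _ _ hL (hrank φ (T a)) 1 (-((n - 1 : ℕ) : 𝕜))
  have e3 : (fun x => (1 : 𝕜) • (T x + ((n - 1 : ℕ) : 𝕜) • (φ x • T a)) +
      (-((n - 1 : ℕ) : 𝕜)) • (φ x • T a)) = ⇑T := by
    funext x
    rw [one_smul, neg_smul, add_neg_cancel_right]
  rw [e3] at hfinal
  exact hfinal
end

section
/- If P is a 1-dominated m-homogeneous polynomial from E to F and φ ∈ E', then the (m+1)-homogeneous polynomial Q(x) = φ(x)·P(x) is 1-dominated. -/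
/-!
A functional `φ` is itself 1-dominated, with constant `‖φ‖` and the Dirac mass at `φ / ‖φ‖`.
A product of a `k`-dominated scalar map and an `m`-dominated map is `(k + m)`-dominated by the
average of the two measures, because for `a, b ≥ 0`
`a ^ k * b ^ m ≤ (a + b) ^ (k + m) = 2 ^ (k + m) * ((a + b) / 2) ^ (k + m)`.
-/

open MeasureTheory

/-- The closed unit ball of the dual of `E`, with the weak-star topology. -/
def dualBall (𝕜 E : Type) [RCLike 𝕜] [NormedAddCommGroup E] [NormedSpace 𝕜 E] :
    Set (WeakDual 𝕜 E) := {φ | ∀ x, ‖φ x‖ ≤ ‖x‖}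

noncomputable instance (𝕜 E : Type) [RCLike 𝕜] [NormedAddCommGroup E] [NormedSpace 𝕜 E] :
    MeasurableSpace (dualBall 𝕜 E) := borel _

/-- `P` is a 1-dominated `m`-homogeneous polynomial: there are `C ≥ 0` and a regular Borel
probability measure `μ` on the dual unit ball (weak-star topology) with
`‖P x‖ ≤ C * (∫ |φ x| dμ)^m`. -/
def IsDominated1 (𝕜 : Type) [RCLike 𝕜] {E F : Type} [NormedAddCommGroup E] [NormedSpace 𝕜 E]
    [NormedAddCommGroup F] [NormedSpace 𝕜 F] (m : ℕ) (P : E → F) : Prop :=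
  ∃ (C : ℝ) (μ : Measure (dualBall 𝕜 E)), 0 ≤ C ∧ IsProbabilityMeasure μ ∧ μ.Regular ∧
    ∀ x, ‖P x‖ ≤ C * (∫ φ, ‖(φ : WeakDual 𝕜 E) x‖ ∂μ) ^ m

theorem pow_mul_pow_le_add_pow {R : Type*} [CommSemiring R] [PartialOrder R] [IsOrderedRing R]
    {a b : R} (ha : 0 ≤ a) (hb : 0 ≤ b) (k m : ℕ) : a ^ k * b ^ m ≤ (a + b) ^ (k + m) := by
  rw [pow_add]
  gcongr
  · exact le_add_of_nonneg_right hb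
  · exact le_add_of_nonneg_left ha

instance MeasureTheory.Measure.innerRegular_dirac {α : Type*} [TopologicalSpace α]
    [MeasurableSpace α] (a : α) : (Measure.dirac a).InnerRegular := by
  refine ⟨fun U hU r hr => ?_⟩
  by_cases ha : a ∈ U
  · refine ⟨{a}, Set.singleton_subset_iff.2 ha, isCompact_singleton, ?_⟩
    rw [Measure.dirac_apply_of_mem (Set.mem_singleton a)]
    exact hr.trans_le prob_le_one
  · simp [Measure.dirac_apply' a hU, ha] at hr

theorem MeasureTheory.isProbabilityMeasure_half_smul_add {α : Type*} [MeasurableSpace α]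
    (μ ν : Measure α) [IsProbabilityMeasure μ] [IsProbabilityMeasure ν] :
    IsProbabilityMeasure ((2⁻¹ : NNReal) • (μ + ν)) := by
  constructor
  simp [ENNReal.inv_two_add_inv_two]

namespace dualBall

variable {𝕜 E : Type} [RCLike 𝕜] [NormedAddCommGroup E] [NormedSpace 𝕜 E]

instance : BorelSpace (dualBall 𝕜 E) := ⟨rfl⟩

theorem integrable_norm_apply (x : E) (μ : Measure (dualBall 𝕜 E)) [IsFiniteMeasure μ] :
    Integrable (fun ψ : dualBall 𝕜 E => ‖(ψ : WeakDual 𝕜 E) x‖) μ := by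
  refine (integrable_const ‖x‖).mono' ?_ (Filter.Eventually.of_forall fun ψ => ?_)
  · exact ((WeakDual.eval_continuous x).comp continuous_subtype_val).norm.aestronglyMeasurable
  · simpa using ψ.2 x

theorem integral_norm_apply_half_smul_add (x : E) (μ ν : Measure (dualBall 𝕜 E))
    [IsFiniteMeasure μ] [IsFiniteMeasure ν] :
    ∫ ψ, ‖(ψ : WeakDual 𝕜 E) x‖ ∂((2⁻¹ : NNReal) • (μ + ν)) =
      2⁻¹ * (∫ ψ, ‖(ψ : WeakDual 𝕜 E) x‖ ∂μ + ∫ ψ, ‖(ψ : WeakDual 𝕜 E) x‖ ∂ν) := by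
  rw [integral_smul_nnreal_measure,
    integral_add_measure (integrable_norm_apply x μ) (integrable_norm_apply x ν)]
  simp [NNReal.smul_def, mul_add]

theorem norm_inv_norm_smul_apply (φ : E →L[𝕜] 𝕜) (x : E) : ‖(‖φ‖⁻¹ • φ) x‖ = ‖φ x‖ / ‖φ‖ := by
  rw [smul_apply, norm_smul, norm_inv, norm_norm, inv_mul_eq_div]

noncomputable def normalize (φ : E →L[𝕜] 𝕜) : dualBall 𝕜 E :=
  ⟨StrongDual.toWeakDual (‖φ‖⁻¹ • φ), fun x => by
    rw [StrongDual.coe_toWeakDual, norm_inv_norm_smul_apply]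
    exact div_le_of_le_mul₀ (norm_nonneg φ) (norm_nonneg x)
      ((φ.le_opNorm x).trans_eq (mul_comm _ _))⟩

theorem norm_apply_eq_opNorm_mul_normalize (φ : E →L[𝕜] 𝕜) (x : E) :
    ‖φ x‖ = ‖φ‖ * ‖((normalize φ : dualBall 𝕜 E) : WeakDual 𝕜 E) x‖ := by
  rcases eq_or_ne φ 0 with rfl | hφ
  · simp
  · rw [normalize, StrongDual.coe_toWeakDual, norm_inv_norm_smul_apply,
      mul_div_cancel₀ _ (norm_ne_zero_iff.2 hφ)]

end dualBall

section

variable {𝕜 E F : Type} [RCLike 𝕜] [NormedAddCommGroup E] [NormedSpace 𝕜 E]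
  [NormedAddCommGroup F] [NormedSpace 𝕜 F]

theorem ContinuousLinearMap.isDominated1 (φ : E →L[𝕜] 𝕜) : IsDominated1 𝕜 1 φ := by
  refine ⟨‖φ‖, Measure.dirac (dualBall.normalize φ), norm_nonneg φ, inferInstance, inferInstance,
    fun x => ?_⟩
  rw [integral_dirac, pow_one, dualBall.norm_apply_eq_opNorm_mul_normalize]

theorem IsDominated1.smul {k m : ℕ} {q : E → 𝕜} {P : E → F} (hq : IsDominated1 𝕜 k q)
    (hP : IsDominated1 𝕜 m P) : IsDominated1 𝕜 (k + m) (fun x => q x • P x) := by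
  obtain ⟨D, μ, hD, hμ, hμr, hq⟩ := hq
  obtain ⟨C, ν, hC, hν, hνr, hP⟩ := hP
  refine ⟨D * C * 2 ^ (k + m), (2⁻¹ : NNReal) • (μ + ν), by positivity,
    isProbabilityMeasure_half_smul_add μ ν, inferInstance, fun x => ?_⟩
  rw [dualBall.integral_norm_apply_half_smul_add]
  set a := ∫ ψ, ‖(ψ : WeakDual 𝕜 E) x‖ ∂μ
  set b := ∫ ψ, ‖(ψ : WeakDual 𝕜 E) x‖ ∂ν
  have ha : 0 ≤ a := integral_nonneg fun _ => norm_nonneg _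
  have hb : 0 ≤ b := integral_nonneg fun _ => norm_nonneg _
  calc ‖q x • P x‖ = ‖q x‖ * ‖P x‖ := norm_smul _ _
    _ ≤ (D * a ^ k) * (C * b ^ m) := mul_le_mul (hq x) (hP x) (norm_nonneg _) (by positivity)
    _ = D * C * (a ^ k * b ^ m) := by ring
    _ ≤ D * C * (a + b) ^ (k + m) := by gcongr; exact pow_mul_pow_le_add_pow ha hb k m
    _ = D * C * 2 ^ (k + m) * (2⁻¹ * (a + b)) ^ (k + m) := by
      rw [mul_pow, ← mul_assoc, mul_assoc (D * C), ← mul_pow, mul_inv_cancel₀ two_ne_zero,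
        one_pow, mul_one]

end

theorem dominated_mul_functional_general {𝕜 E F : Type} [RCLike 𝕜]
    [NormedAddCommGroup E] [NormedSpace 𝕜 E]
    [NormedAddCommGroup F] [NormedSpace 𝕜 F]
    (m : ℕ) (P : E → F)
    (hP : IsDominated1 𝕜 m P) (φ : E →L[𝕜] 𝕜) :
    IsDominated1 𝕜 (m + 1) (fun x => φ x • P x) := by
  simpa only [add_comm 1 m] using φ.isDominated1.smul hP

/-- If `P` is a 1-dominated `m`-homogeneous polynomial and `φ ∈ E'`, then
`x ↦ φ(x) • P(x)` is a 1-dominated `(m+1)`-homogeneous polynomial. -/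
theorem dominated_mul_functional {𝕜 E F : Type} [RCLike 𝕜]
    [NormedAddCommGroup E] [NormedSpace 𝕜 E] [CompleteSpace E]
    [NormedAddCommGroup F] [NormedSpace 𝕜 F] [CompleteSpace F]
    (m : ℕ) (P : E → F)
    (S : ContinuousMultilinearMap 𝕜 (fun _ : Fin m => E) F)
    (hdiag : ∀ x, P x = S fun _ => x)
    (hP : IsDominated1 𝕜 m P) (φ : E →L[𝕜] 𝕜) :
    IsDominated1 𝕜 (m + 1) (fun x => φ x • P x) :=
  dominated_mul_functional_general m P hP φ
end

section
/- Let P ∈ P(^mE;F) be a continuous m-homogeneous polynomial such that Ψ_1(P̌) : E → L(^{m-1}E;F) is a compact operator, and let φ ∈ E'. Define the (m+1)-homogeneous polynomial Q(x) = φ(x)P(x). Then Ψ_1(Q̌) : E → L(^mE;F) is compact, where Q̌(x_1,...,x_{m+1}) = (1/(m+1)) Σ_{i=1}^{m+1} φ(x_i) P̌(x_1,...,[omit x_i],...,x_{m+1}). Indeed Ψ_1(Q̌)(x) = (1/(m+1)) φ(x)·P̌ + (m/(m+1)) φ ⊗ Ψ_1(P̌)(x) as an element-valued map, which is a sum of compact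 operators. -/
/-!
A symmetric multilinear map is determined by its diagonal: the `n`-th derivative of
`x ↦ D (x, …, x)` is `∑ σ, D ∘ σ = n! • D`. Hence `R` is the explicit symmetrization
`Q̌ (x₀, …, x_{k+1}) = (k+2)⁻¹ ∑ₜ φ (xₜ) S (x₀, …, x̂ₜ, …, x_{k+1})` of `φ ⊗ S`. Fixing `x₀ = x`,
the term `t = 0` gives the rank-one operator `x ↦ φ x • S`, and each other term is a bounded
operator (inserting `φ` in a slot) applied to `S.curryLeft x`; both are compact.
-/

open Equiv

theorem Equiv.Perm.exists_perm_comp_succAbove {n : ℕ} (σ : Perm (Fin (n + 1)))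
    (t : Fin (n + 1)) : ∃ τ : Perm (Fin n), σ ∘ t.succAbove = (σ t).succAbove ∘ τ := by
  refine ⟨(finSuccAboveEquiv t).trans ((σ.subtypeEquiv (p := (· ≠ t)) (q := (· ≠ σ t))
    fun _ => σ.injective.ne_iff.symm).trans (finSuccAboveEquiv (σ t)).symm), funext fun j => ?_⟩
  have h := (finSuccAboveEquiv (σ t)).apply_symm_apply
    ⟨σ (t.succAbove j), σ.injective.ne (t.succAbove_ne j)⟩
  rw [Subtype.ext_iff, finSuccAboveEquiv_apply] at h
  exact h.symm

theorem Fin.removeNth_succ_cons {α : Type*} {n : ℕ} (i : Fin (n + 1)) (x : α)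
    (v : Fin (n + 1) → α) :
    i.succ.removeNth (Fin.cons x v : Fin (n + 2) → α) = Fin.cons x (i.removeNth v) := by
  funext j
  cases j using Fin.cases <;> simp [Fin.removeNth_apply, Fin.succ_succAbove_succ]

theorem isCompactOperator_smulRight {𝕜 E G : Type*} [RCLike 𝕜] [NormedAddCommGroup E]
    [NormedSpace 𝕜 E] [NormedAddCommGroup G] [NormedSpace 𝕜 G] (φ : E →L[𝕜] 𝕜) (v : G) :
    IsCompactOperator (φ.smulRight v) :=
  (isCompactOperator_of_locallyCompactSpace_dom φ).continuous_comp
    (continuous_id.smul continuous_const)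

section Symmetrization

variable {𝕜 E F : Type} [RCLike 𝕜] [NormedAddCommGroup E] [NormedSpace 𝕜 E]
  [NormedAddCommGroup F] [NormedSpace 𝕜 F] {n : ℕ}

theorem IsSymMap.sum_perm_apply {D : E [×n]→L[𝕜] F} (hD : IsSymMap n D) (v : Fin n → E) :
    ∑ σ : Perm (Fin n), D (fun i => v (σ i)) = n.factorial • D v :=
  (Finset.sum_congr rfl fun σ _ => hD σ v).trans (by simp [Fintype.card_perm])

theorem IsSymMap.ext_diag {D D' : E [×n]→L[𝕜] F} (hD : IsSymMap n D) (hD' : IsSymMap n D')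
    (h : ∀ x, D (fun _ => x) = D' (fun _ => x)) : D = D' := by
  ext v
  have key : (n.factorial : 𝕜) • D v = (n.factorial : 𝕜) • D' v := by
    rw [Nat.cast_smul_eq_nsmul, Nat.cast_smul_eq_nsmul, ← hD.sum_perm_apply,
      ← hD'.sum_perm_apply, ← D.iteratedFDeriv_comp_diagonal 0,
      ← D'.iteratedFDeriv_comp_diagonal 0, funext h]
  exact smul_right_injective F (Nat.cast_ne_zero.mpr n.factorial_ne_zero) key

variable (φ : E →L[𝕜] 𝕜)

noncomputable def insertFunctional (i : Fin (n + 1)) :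
    (E [×n]→L[𝕜] F) →L[𝕜] E [×(n + 1)]→L[𝕜] F :=
  ((ContinuousMultilinearMap.curryMidEquiv 𝕜 (fun _ : Fin (n + 1) => E) F i).symm
    : _ →L[𝕜] _) ∘L ContinuousLinearMap.smulRightL 𝕜 E _ φ

@[simp]
theorem insertFunctional_apply (i : Fin (n + 1)) (T : E [×n]→L[𝕜] F) (v : Fin (n + 1) → E) :
    insertFunctional φ i T v = φ (v i) • T (i.removeNth v) :=
  rfl

/-- For symmetric `S`, this is the paper's `Q̌`: the symmetric multilinear map of
`Q x = φ x • S (x, …, x)`. -/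
noncomputable def symmetrizedTensor (S : E [×n]→L[𝕜] F) : E [×(n + 1)]→L[𝕜] F :=
  ((n : 𝕜) + 1)⁻¹ • ∑ t : Fin (n + 1), insertFunctional φ t S

theorem symmetrizedTensor_apply (S : E [×n]→L[𝕜] F) (v : Fin (n + 1) → E) :
    symmetrizedTensor φ S v = ((n : 𝕜) + 1)⁻¹ • ∑ t, φ (v t) • S (t.removeNth v) := by
  simp [symmetrizedTensor]

theorem symmetrizedTensor_diag (S : E [×n]→L[𝕜] F) (x : E) :
    symmetrizedTensor φ S (fun _ => x) = φ x • S (fun _ => x) := by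
  have hn : (n : 𝕜) + 1 ≠ 0 := by exact_mod_cast n.succ_ne_zero
  simp only [symmetrizedTensor_apply, Fin.removeNth_fun_const, Finset.sum_const,
    Finset.card_univ, Fintype.card_fin, ← Nat.cast_smul_eq_nsmul 𝕜, smul_smul, Nat.cast_succ,
    inv_mul_cancel_left₀ hn]

theorem IsSymMap.symmetrizedTensor {S : E [×n]→L[𝕜] F} (hS : IsSymMap n S) :
    IsSymMap (n + 1) (symmetrizedTensor φ S) := by
  intro σ v
  simp only [symmetrizedTensor_apply]
  refine congrArg _ (Fintype.sum_equiv σ _ _ fun t => ?_)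
  obtain ⟨τ, hτ⟩ := σ.exists_perm_comp_succAbove t
  have hremove : t.removeNth (v ∘ σ) = (σ t).removeNth v ∘ τ :=
    funext fun j => congrArg v (congrFun hτ j)
  rw [Function.comp_apply, hremove, hS]

theorem symmetrizedTensor_curryLeft {k : ℕ} (S : E [×(k + 1)]→L[𝕜] F) :
    (symmetrizedTensor φ S).curryLeft =
      ((k : 𝕜) + 2)⁻¹ • (φ.smulRight S + (∑ i, insertFunctional φ i) ∘L S.curryLeft) := by
  ext x v
  rw [ContinuousMultilinearMap.curryLeft_apply, symmetrizedTensor_apply, Fin.sum_univ_succ]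
  simp [Fin.removeNth_succ_cons, Finset.smul_sum, add_assoc, one_add_one_eq_two]

end Symmetrization

theorem compact_linearization_mul_functional_general {𝕜 E F : Type} [RCLike 𝕜]
    [NormedAddCommGroup E] [NormedSpace 𝕜 E]
    [NormedAddCommGroup F] [NormedSpace 𝕜 F]
    (k : ℕ) (S : ContinuousMultilinearMap 𝕜 (fun _ : Fin (k + 1) => E) F)
    (hsym : IsSymMap (k + 1) S) (hcomp : IsCompactOperator ⇑S.curryLeft)
    (φ : E →L[𝕜] 𝕜)
    (R : ContinuousMultilinearMap 𝕜 (fun _ : Fin (k + 2) => E) F)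
    (hRsym : IsSymMap (k + 2) R)
    (hRdiag : ∀ x, R (fun _ => x) = φ x • S (fun _ => x)) :
    IsCompactOperator ⇑R.curryLeft := by
  have hR : R = symmetrizedTensor φ S :=
    hRsym.ext_diag (hsym.symmetrizedTensor φ) fun x => by rw [hRdiag, symmetrizedTensor_diag]
  rw [hR, symmetrizedTensor_curryLeft, FunLike.coe_smul, FunLike.coe_add,
    ContinuousLinearMap.coe_comp]
  exact ((isCompactOperator_smulRight φ S).add (hcomp.clm_comp _)).smul _

/-- If `Ψ₁(P̌)` is a compact operator and `φ ∈ E'`, then `Ψ₁(Q̌)` is compact, where `Q̌` is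
the symmetric multilinear map of the polynomial `Q(x) = φ(x) P(x)`. -/
theorem compact_linearization_mul_functional {𝕜 E F : Type} [RCLike 𝕜]
    [NormedAddCommGroup E] [NormedSpace 𝕜 E] [CompleteSpace E]
    [NormedAddCommGroup F] [NormedSpace 𝕜 F] [CompleteSpace F]
    (k : ℕ) (S : ContinuousMultilinearMap 𝕜 (fun _ : Fin (k + 1) => E) F)
    (hsym : IsSymMap (k + 1) S) (hcomp : IsCompactOperator ⇑S.curryLeft)
    (φ : E →L[𝕜] 𝕜)
    (R : ContinuousMultilinearMap 𝕜 (fun _ : Fin (k + 2) => E) F)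
    (hRsym : IsSymMap (k + 2) R)
    (hRdiag : ∀ x, R (fun _ => x) = φ x • S (fun _ => x)) :
    IsCompactOperator ⇑R.curryLeft :=
  compact_linearization_mul_functional_general k S hsym hcomp φ R hRsym hRdiag
end

section
/- Let I be any ideal of homogeneous polynomials and let I be an operator ideal. For every m, E, F: P_{L[I]}(^mE;F) ⊆ P_{[I]}(^mE;F). That is, if P = Q ∘ u with u ∈ I(E;G) and Q ∈ P(^mG;F), then for each i = 1,...,m the linearization Ψ_i(P̌) : E → L(^{m-1}E;F) belongs to I(E; L(^{m-1}E;F)). -/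
open Finset in
lemma polar_indicator_sum {m : ℕ} (r : Fin m → Fin m) :
    ∑ A : Finset (Fin m), (if ∀ i, r i ∈ A then ((-1 : ℤ) ^ (m - A.card)) else 0)
      = if Function.Surjective r then 1 else 0 := by
  classical
  have hinv : Function.Bijective (fun A : Finset (Fin m) => Aᶜ) :=
    Function.Involutive.bijective (fun A => compl_compl A)
  rw [← Fintype.sum_bijective _ hinv _ _ (fun C => rfl)]
  have key : ∀ C : Finset (Fin m),
      (if ∀ i, r i ∈ Cᶜ then ((-1 : ℤ) ^ (m - Cᶜ.card)) else 0)
        = if C ∈ (Finset.univ.image r)ᶜ.powerset then (-1 : ℤ) ^ C.card else 0 := by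
    intro C
    have h1 : (∀ i, r i ∈ Cᶜ) ↔ C ∈ (Finset.univ.image r)ᶜ.powerset := by
      constructor
      · intro h
        rw [Finset.mem_powerset]
        intro a haC
        simp only [Finset.mem_compl, Finset.mem_image]
        rintro ⟨i, -, rfl⟩
        exact absurd haC (by simpa using h i)
      · intro h i
        rw [Finset.mem_powerset] at h
        rw [Finset.mem_compl]
        intro hiC
        have := h hiC
        simp only [Finset.mem_compl, Finset.mem_image] at this
        exact this ⟨i, Finset.mem_univ i, rfl⟩
    have hC : C.card ≤ m := by simpa using Finset.card_le_univ C
    have h2 : m - Cᶜ.card = C.card := by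
      rw [Finset.card_compl, Fintype.card_fin]; omega
    simp only [h2]
    exact if_congr h1 rfl rfl
  rw [Finset.sum_congr rfl (fun C _ => key C), ← Finset.sum_filter,
    Finset.filter_mem_eq_inter, Finset.univ_inter,
    Finset.sum_powerset_neg_one_pow_card]
  refine if_congr ?_ rfl rfl
  rw [Finset.compl_eq_empty_iff, Finset.eq_univ_iff_forall]
  constructor
  · intro h a
    have := h a
    simp only [Finset.mem_image, Finset.mem_univ, true_and] at this
    exact this
  · intro h a
    simp only [Finset.mem_image, Finset.mem_univ, true_and]
    exact h a

open Finset in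
lemma polar_aux {𝕜 E F : Type} [RCLike 𝕜] [NormedAddCommGroup E] [NormedSpace 𝕜 E]
    [NormedAddCommGroup F] [NormedSpace 𝕜 F] {m : ℕ}
    (f : ContinuousMultilinearMap 𝕜 (fun _ : Fin m => E) F) (x : Fin m → E) :
    ∑ A : Finset (Fin m), (-1 : ℤ) ^ (m - A.card) • f (fun _ => ∑ i ∈ A, x i)
      = ∑ σ : Equiv.Perm (Fin m), f (x ∘ σ) := by
  classical
  have h1 : ∀ A : Finset (Fin m),
      f (fun _ => ∑ i ∈ A, x i)
        = ∑ r ∈ Fintype.piFinset (fun _ : Fin m => A), f (fun i => x (r i)) :=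
    fun A => f.map_sum_finset (fun _ j => x j) (fun _ => A)
  calc ∑ A : Finset (Fin m), (-1 : ℤ) ^ (m - A.card) • f (fun _ => ∑ i ∈ A, x i)
      = ∑ A : Finset (Fin m), ∑ r : Fin m → Fin m,
          (if ∀ i, r i ∈ A then ((-1 : ℤ) ^ (m - A.card)) else 0) • f (fun i => x (r i)) := by
        refine Finset.sum_congr rfl fun A _ => ?_
        have he : ∀ r : Fin m → Fin m,
            (if ∀ i, r i ∈ A then ((-1 : ℤ) ^ (m - A.card)) else 0) • f (fun i => x (r i))
              = if r ∈ Fintype.piFinset (fun _ : Fin m => A) then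
                  ((-1 : ℤ) ^ (m - A.card)) • f (fun i => x (r i)) else 0 := by
          intro r
          simp [Fintype.mem_piFinset, ite_smul]
        rw [h1, Finset.smul_sum, Finset.sum_congr rfl fun r _ => he r,
          Finset.sum_ite_mem, Finset.univ_inter]
    _ = ∑ r : Fin m → Fin m,
          (∑ A : Finset (Fin m), if ∀ i, r i ∈ A then ((-1 : ℤ) ^ (m - A.card)) else 0)
            • f (fun i => x (r i)) := by
        rw [Finset.sum_comm]
        exact Finset.sum_congr rfl fun r _ => (Finset.sum_smul).symm
    _ = ∑ r : Fin m → Fin m,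
          (if Function.Surjective r then (1 : ℤ) else 0) • f (fun i => x (r i)) :=
        Finset.sum_congr rfl fun r _ => by rw [polar_indicator_sum]
    _ = ∑ r ∈ Finset.univ.filter (fun r : Fin m → Fin m => Function.Surjective r),
          f (fun i => x (r i)) := by
        rw [Finset.sum_filter]
        exact Finset.sum_congr rfl fun r _ => by split <;> simp
    _ = ∑ σ : Equiv.Perm (Fin m), f (x ∘ σ) := by
        refine (Finset.sum_bij (fun (σ : Equiv.Perm (Fin m)) _ => (σ : Fin m → Fin m))
          ?_ ?_ ?_ ?_).symm
        · intro σ _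
          simp [Finset.mem_filter, σ.surjective]
        · intro σ _ τ _ h
          exact Equiv.coe_fn_injective h
        · intro r hr
          rw [Finset.mem_filter] at hr
          obtain ⟨-, hsurj⟩ := hr
          have hbij : Function.Bijective r := Finite.surjective_iff_bijective.mp hsurj
          exact ⟨Equiv.ofBijective r hbij, Finset.mem_univ _, rfl⟩
        · intro σ _
          rfl


structure BanachSpaceOver (𝕜 : Type) [NormedField 𝕜] where
  carrier : Type
  [grp : NormedAddCommGroup carrier]
  [mod : NormedSpace 𝕜 carrier]
  [comp : CompleteSpace carrier]

attribute [instance] BanachSpaceOver.grp BanachSpaceOver.mod BanachSpaceOver.comp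

/-- `P_{L[I]} ⊆ P_{[I]}`: if a homogeneous polynomial factors as `P = Q ∘ u` with
`u ∈ I(E;G)`, then the linearization `Ψ₁(P̌)` of its symmetric multilinear map belongs to
`I(E; L(^{m-1}E;F))`. The operator ideal `I` (with fixed domain `E`) is given with its
stability under left composition with bounded operators. -/
theorem factorized_poly_linearization_in_ideal {𝕜 E : Type} [RCLike 𝕜]
    [NormedAddCommGroup E] [NormedSpace 𝕜 E] [CompleteSpace E]
    (I : ∀ G : BanachSpaceOver 𝕜, Set (E →L[𝕜] G.carrier))
    (hcomp : ∀ (G H : BanachSpaceOver 𝕜) (u : E →L[𝕜] G.carrier), u ∈ I G →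
        ∀ Λ : G.carrier →L[𝕜] H.carrier, Λ.comp u ∈ I H)
    (F : BanachSpaceOver 𝕜) (k : ℕ)
    (G : BanachSpaceOver 𝕜) (u : E →L[𝕜] G.carrier) (hu : u ∈ I G)
    (Q : ContinuousMultilinearMap 𝕜 (fun _ : Fin (k + 1) => G.carrier) F.carrier)
    (S : ContinuousMultilinearMap 𝕜 (fun _ : Fin (k + 1) => E) F.carrier)
    (hsym : IsSymMap (k + 1) S)
    (hdiag : ∀ x, S (fun _ => x) = Q (fun _ => u x)) :
    S.curryLeft ∈
      I ⟨ContinuousMultilinearMap 𝕜 (fun _ : Fin k => E) F.carrier⟩ := by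
  classical
  set T : ContinuousMultilinearMap 𝕜 (fun _ : Fin (k + 1) => E) F.carrier :=
    Q.compContinuousLinearMap (fun _ => u) with hT
  have hdiag' : ∀ z : E, S (fun _ => z) = T (fun _ => z) := by
    intro z
    rw [hdiag z, hT, ContinuousMultilinearMap.compContinuousLinearMap_apply]
  -- polarization: m! • S x = ∑_σ T (x ∘ σ)
  have hfac : (((k + 1).factorial : 𝕜)) ≠ 0 := by
    exact_mod_cast Nat.cast_ne_zero.mpr (Nat.factorial_ne_zero (k + 1))
  have hST : ∀ x : Fin (k + 1) → E,
      S x = (((k + 1).factorial : 𝕜))⁻¹ • ∑ σ : Equiv.Perm (Fin (k + 1)), T (x ∘ σ) := by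
    intro x
    have h1 : ∑ σ : Equiv.Perm (Fin (k + 1)), S (x ∘ σ) = ∑ σ : Equiv.Perm (Fin (k + 1)), T (x ∘ σ) := by
      rw [← polar_aux S x, ← polar_aux T x]
      exact Finset.sum_congr rfl fun A _ => by rw [hdiag']
    have h2 : ∑ σ : Equiv.Perm (Fin (k + 1)), S (x ∘ σ) = ((k + 1).factorial : ℕ) • S x := by
      rw [Finset.sum_congr rfl fun σ _ => hsym σ x, Finset.sum_const, Finset.card_univ,
        Fintype.card_perm, Fintype.card_fin]
    rw [← h1, h2, ← Nat.cast_smul_eq_nsmul 𝕜, inv_smul_smul₀ hfac]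
  -- the bounded operator Λ
  set Λ : G.carrier →L[𝕜] ContinuousMultilinearMap 𝕜 (fun _ : Fin k => E) F.carrier :=
    (((k + 1).factorial : 𝕜))⁻¹ • ∑ σ : Equiv.Perm (Fin (k + 1)),
      (ContinuousMultilinearMap.compContinuousLinearMapL (fun _ : Fin k => u)).comp
        ((Q.domDomCongr σ).curryLeft) with hΛ
  have key : S.curryLeft = Λ.comp u := by
    ext x v
    have hcons : ∀ j : Fin (k + 1), u ((Fin.cons x v : Fin (k + 1) → E) j) = (Fin.cons (u x) (fun i => u (v i)) : Fin (k + 1) → G.carrier) j := by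
      intro j
      refine Fin.cases ?_ ?_ j <;> simp
    calc S.curryLeft x v = S (Fin.cons x v) := rfl
      _ = (((k + 1).factorial : 𝕜))⁻¹ • ∑ σ : Equiv.Perm (Fin (k + 1)), T ((Fin.cons x v) ∘ σ) :=
          hST (Fin.cons x v)
      _ = (Λ.comp u) x v := by
          rw [hΛ]
          simp only [ContinuousLinearMap.coe_comp', Function.comp_apply,
            ContinuousLinearMap.smul_apply, ContinuousLinearMap.sum_apply,
            ContinuousMultilinearMap.smul_apply, ContinuousMultilinearMap.sum_apply]
          congr 1
          refine Finset.sum_congr rfl fun σ _ => ?_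
          simp only [hT, ContinuousMultilinearMap.compContinuousLinearMap_apply,
            ContinuousMultilinearMap.compContinuousLinearMapL_apply,
            ContinuousMultilinearMap.curryLeft_apply,
            ContinuousMultilinearMap.domDomCongr_apply]
          congr 1
          funext i
          exact (hcons (σ i)).trans rfl
  rw [key]
  exact hcomp G ⟨ContinuousMultilinearMap 𝕜 (fun _ : Fin k => E) F.carrier⟩ u hu Λ
end

section
/- Define P : ℓ² → 𝕂 by P(x) = Σ_{j=1}^∞ j^{-α} x_j², where α = 1/2 + ε and 0 < ε < 1/2. Then P is not 1-dominated. More precisely, its associated symmetric bilinear form P̌(x,y) = Σ_j j^{-α} x_j y_j fails the inequality (Σ_{j=1}^m ‖P̌(e_j,e_j)‖^{1/2})² ≤ C · sup_{φ∈B_{(ℓ²)'}} (Σ_{j=1}^m |φ(e_j)|)², for any constant C: indeed (Σ_{j=1}^m j^{-α/2})² ≥ m^{2-α} while the weak ℓ¹-norm of (e_1,...,e_m) in ℓ² equals m^{1/2}, and m^{2-α} ≤ C·m for all m forces α ≥ 1, a contradiction. -/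
open scoped BigOperators ENNReal NNReal

lemma exists_unit_mul_eq_norm {𝕜 : Type} [RCLike 𝕜] (a : 𝕜) :
    ∃ c : 𝕜, ‖c‖ = 1 ∧ c * a = (‖a‖ : ℝ) := by
  by_cases ha : a = 0
  · exact ⟨1, norm_one, by simp [ha]⟩
  · refine ⟨(‖a‖ : 𝕜) / a, ?_, ?_⟩
    · rw [norm_div, RCLike.norm_ofReal, abs_of_nonneg (norm_nonneg a),
        div_self (norm_ne_zero_iff.mpr ha)]
    · field_simp

/-- The polynomial `P(x) = Σ_j (j+1)^{-α} x_j²` on `ℓ²` with `α = 1/2 + ε`, `0 < ε < 1/2`,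
is not 1-dominated: there is no `C ≥ 0` with
`(Σ ‖P x_j‖^{1/2})² ≤ C · sup_{‖φ‖≤1} (Σ |φ x_j|)²` for all finite families (the supremum
is encoded by quantifying over all upper bounds `r`). -/
theorem diagonal_poly_not_dominated {𝕜 : Type} [RCLike 𝕜]
    (ε : ℝ) (hε0 : 0 < ε) (hε : ε < 1 / 2) (α : ℝ) (hα : α = 1 / 2 + ε)
    (P : lp (fun _ : ℕ => 𝕜) 2 → 𝕜)
    (hPdef : ∀ x, P x = ∑' j : ℕ, ((j + 1 : ℝ) ^ (-α)) • ((x : ∀ _ : ℕ, 𝕜) j) ^ 2) :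
    ¬ ∃ C : ℝ, 0 ≤ C ∧ ∀ (k : ℕ) (x : Fin k → lp (fun _ : ℕ => 𝕜) 2) (r : ℝ),
        (∀ φ : lp (fun _ : ℕ => 𝕜) 2 →L[𝕜] 𝕜, ‖φ‖ ≤ 1 → ∑ j, ‖φ (x j)‖ ≤ r) →
        (∑ j, ‖P (x j)‖ ^ ((1 : ℝ) / 2)) ^ (2 : ℕ) ≤ C * r ^ (2 : ℕ) := by
  rintro ⟨C, hC, h⟩
  have hα0 : 0 < α := by rw [hα]; linarith
  have hα1 : 0 < 1 - α := by rw [hα]; linarith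
  -- pick k with C < k ^ (1 - α) and 0 < k
  obtain ⟨k, hk0, hkC⟩ : ∃ k : ℕ, 0 < k ∧ C < (k : ℝ) ^ (1 - α) := by
    have h1 : Filter.Tendsto (fun n : ℕ => (n : ℝ) ^ (1 - α)) Filter.atTop Filter.atTop :=
      (tendsto_rpow_atTop hα1).comp tendsto_natCast_atTop_atTop
    obtain ⟨k, hk⟩ := ((h1.eventually_gt_atTop C).and (Filter.eventually_gt_atTop 0)).exists
    exact ⟨k, hk.2, hk.1⟩
  have hkR : (0 : ℝ) < (k : ℝ) := Nat.cast_pos.mpr hk0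
  set x : Fin k → lp (fun _ : ℕ => 𝕜) 2 := fun j => lp.single 2 (j : ℕ) 1 with hx
  -- value of P on basis vectors
  have hPx : ∀ j : Fin k, ‖P (x j)‖ = ((j : ℕ) + 1 : ℝ) ^ (-α) := by
    intro j
    have h1 : P (x j) = (((j : ℕ) + 1 : ℝ) ^ (-α)) •
        ((x j : ∀ _ : ℕ, 𝕜) (j : ℕ)) ^ 2 := by
      rw [hPdef]
      refine tsum_eq_single (j : ℕ) ?_
      intro i hij
      have : (x j : ∀ _ : ℕ, 𝕜) i = 0 := lp.single_apply_ne 2 (j : ℕ) 1 hij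
      simp [this]
    have h2 : (x j : ∀ _ : ℕ, 𝕜) (j : ℕ) = 1 := lp.single_apply_self 2 (j : ℕ) 1
    rw [h1, h2, one_pow, norm_smul, norm_one, mul_one, Real.norm_eq_abs,
      abs_of_nonneg (Real.rpow_nonneg (by positivity) _)]
  -- the weak ℓ¹ bound
  have hr : ∀ φ : lp (fun _ : ℕ => 𝕜) 2 →L[𝕜] 𝕜, ‖φ‖ ≤ 1 →
      ∑ j, ‖φ (x j)‖ ≤ Real.sqrt k := by
    intro φ hφ
    choose c hc1 hc2 using fun j : Fin k => exists_unit_mul_eq_norm (φ (x j))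
    set v : lp (fun _ : ℕ => 𝕜) 2 := ∑ j, (c j) • x j with hv
    have hφv : φ v = ((∑ j, ‖φ (x j)‖ : ℝ) : 𝕜) := by
      rw [hv, map_sum]
      push_cast
      exact Finset.sum_congr rfl fun j _ => by rw [map_smul, smul_eq_mul, hc2]
    -- norm of v
    have hf : ∀ i ∈ Finset.range k, ∀ (hi : i < k),
        (c ⟨i, hi⟩ : 𝕜) = c ⟨i, hi⟩ := fun _ _ _ => rfl
    set f : ℕ → 𝕜 := fun i => if hi : i < k then c ⟨i, hi⟩ else 0 with hfdef
    have hvf : v = ∑ i ∈ Finset.range k, lp.single 2 i (f i) := by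
      rw [hv, Finset.sum_range fun i => lp.single 2 i (f i)]
      refine Finset.sum_congr rfl fun j _ => ?_
      rw [← lp.single_smul]
      congr 1
      simp [hfdef, j.isLt, smul_eq_mul, mul_one]
    have hnorm2 : ‖v‖ ^ (2 : ℝ) = (k : ℝ) := by
      rw [hvf]
      have := lp.norm_sum_single (p := 2) (by norm_num) f (Finset.range k)
      rw [show (2 : ℝ≥0∞).toReal = (2 : ℝ) by norm_num] at this
      rw [this]
      have : ∀ i ∈ Finset.range k, ‖f i‖ ^ (2 : ℝ) = 1 := by
        intro i hi
        have hik : i < k := Finset.mem_range.mp hi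
        simp [hfdef, hik, hc1, Real.one_rpow]
      rw [Finset.sum_congr rfl this, Finset.sum_const, Finset.card_range]
      simp
    have hsq2 : ‖v‖ ^ (2 : ℕ) = (k : ℝ) := by
      rw [← Real.rpow_natCast ‖v‖ 2]; exact_mod_cast hnorm2
    have hvnorm : ‖v‖ = Real.sqrt k := by
      rw [← hsq2, Real.sqrt_sq (norm_nonneg v)]
    calc ∑ j, ‖φ (x j)‖ = ‖φ v‖ := by
          rw [hφv, RCLike.norm_ofReal, abs_of_nonneg (Finset.sum_nonneg fun j _ => norm_nonneg _)]
      _ ≤ ‖φ‖ * ‖v‖ := φ.le_opNorm v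
      _ ≤ 1 * Real.sqrt k := by
          apply mul_le_mul hφ (le_of_eq hvnorm) (norm_nonneg v) zero_le_one
      _ = Real.sqrt k := one_mul _
  have key := h k x (Real.sqrt k) hr
  -- lower bound on the left side
  have hterm : ∀ j : Fin k, (k : ℝ) ^ (-(α/2)) ≤ ‖P (x j)‖ ^ ((1:ℝ)/2) := by
    intro j
    have hj1 : (0:ℝ) < (j:ℕ) + 1 := by positivity
    have hjk : ((j:ℕ) : ℝ) + 1 ≤ (k : ℝ) := by exact_mod_cast Nat.succ_le_of_lt j.isLt
    rw [hPx j, ← Real.rpow_mul hj1.le]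
    have : -α * (1/2) = -(α/2) := by ring
    rw [this]
    exact Real.rpow_le_rpow_of_nonpos hj1 hjk (by linarith)
  have hsum : (k:ℝ) * (k:ℝ) ^ (-(α/2)) ≤ ∑ j, ‖P (x j)‖ ^ ((1:ℝ)/2) := by
    calc (k:ℝ) * (k:ℝ) ^ (-(α/2)) = ∑ _j : Fin k, (k:ℝ) ^ (-(α/2)) := by
          rw [Finset.sum_const, Finset.card_univ, Fintype.card_fin, nsmul_eq_mul]
      _ ≤ _ := Finset.sum_le_sum fun j _ => hterm j
  have hLHS : ((k:ℝ) * (k:ℝ) ^ (-(α/2))) ^ (2:ℕ) = (k:ℝ) ^ (1-α) * (k:ℝ) := by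
    rw [mul_pow, ← Real.rpow_natCast ((k:ℝ) ^ (-(α/2))) 2, ← Real.rpow_mul hkR.le,
      ← Real.rpow_natCast (k:ℝ) 2, ← Real.rpow_add hkR]
    rw [show ((2:ℕ):ℝ) + -(α/2) * ((2:ℕ):ℝ) = (1-α) + 1 by push_cast; ring,
      Real.rpow_add hkR, Real.rpow_one]
  have hrsq : (Real.sqrt (k:ℝ)) ^ (2:ℕ) = (k:ℝ) := Real.sq_sqrt hkR.le
  have hfin : (k:ℝ) ^ (1-α) * (k:ℝ) ≤ C * (k:ℝ) := by
    have h1 : ((k:ℝ) * (k:ℝ) ^ (-(α/2))) ^ (2:ℕ) ≤ C * (Real.sqrt (k:ℝ)) ^ (2:ℕ) :=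
      le_trans (pow_le_pow_left₀ (by positivity) hsum 2) key
    rwa [hLHS, hrsq] at h1
  have : (k:ℝ) ^ (1-α) ≤ C := le_of_mul_le_mul_right hfin hkR
  linarith
end

section
/- If u : E → F is a nuclear linear operator and φ ∈ F' is a nonzero continuous functional, then for every n ≥ 1 the n-homogeneous polynomial P(x) = φ(u(x))^{n-1} u(x) is a nuclear polynomial. (Indeed P = Q ∘ u with Q(y) = φ(y)^{n-1} y, so P factors through a nuclear operator, and every polynomial factoring through a nuclear operator is nuclear.) -/
/-!
Write `u x = ∑ θᵢ(x) yᵢ` with `‖θᵢ‖ ≤ 1` and `∑ ‖yᵢ‖ < ∞`. Lagrange interpolation at the nodes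
`0, …, n`, applied to the functional `p ↦ p'(0)`, gives scalars `cⱼ` with
`∑ⱼ cⱼ (a + j b)ⁿ = n aⁿ⁻¹ b` for all `a, b`. Hence, for `ψ = φ ∘ u`,
`ψ(x)ⁿ⁻¹ u x = ∑ᵢ ∑ⱼ (ψ + j θᵢ)(x)ⁿ (cⱼ / n) yᵢ`, and `‖ψ + j θᵢ‖ ≤ ‖ψ‖ + n` makes this double
series a nuclear representation.
-/

/-- `u` is a nuclear operator: `u = Σ φ_i ⊗ y_i` with `Σ ‖φ_i‖‖y_i‖ < ∞`. -/
def IsNuclearOp (𝕜 : Type) [RCLike 𝕜] {E F : Type} [NormedAddCommGroup E] [NormedSpace 𝕜 E]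
    [NormedAddCommGroup F] [NormedSpace 𝕜 F] (u : E → F) : Prop :=
  ∃ (φ : ℕ → (E →L[𝕜] 𝕜)) (y : ℕ → F),
    Summable (fun i => ‖φ i‖ * ‖y i‖) ∧ ∀ x, HasSum (fun i => φ i x • y i) (u x)

/-- `P` is a nuclear `m`-homogeneous polynomial: `P x = Σ (φ_i x)^m • y_i` with
`Σ ‖φ_i‖^m ‖y_i‖ < ∞`. -/
def IsNuclearPoly (𝕜 : Type) [RCLike 𝕜] {E F : Type} [NormedAddCommGroup E] [NormedSpace 𝕜 E]
    [NormedAddCommGroup F] [NormedSpace 𝕜 F] (m : ℕ) (P : E → F) : Prop :=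
  ∃ (φ : ℕ → (E →L[𝕜] 𝕜)) (y : ℕ → F),
    Summable (fun i => ‖φ i‖ ^ m * ‖y i‖) ∧ ∀ x, HasSum (fun i => (φ i x) ^ m • y i) (P x)

open Polynomial Finset in
theorem exists_sum_mul_add_mul_pow_eq (K : Type*) [Field K] [CharZero K] (n : ℕ) :
    ∃ c : Fin (n + 1) → K, ∀ a b : K,
      ∑ j, c j * (a + j * b) ^ n = n * a ^ (n - 1) * b := by
  set v : Fin (n + 1) → K := fun j => (j : ℕ)
  have hv : Set.InjOn v (univ : Finset (Fin (n + 1))) := fun i _ j _ h =>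
    Fin.ext (Nat.cast_injective h)
  refine ⟨fun j => (derivative (Lagrange.basis univ v j)).eval 0, fun a b => ?_⟩
  set f : K[X] := (C a + X * C b) ^ n
  have hdeg : f.degree < #(univ : Finset (Fin (n + 1))) := by
    have : f.natDegree ≤ n * 1 := natDegree_pow_le_of_le n (by compute_degree!)
    rw [card_univ, Fintype.card_fin]
    exact (degree_le_of_natDegree_le this).trans_lt (mod_cast (by omega : n * 1 < n + 1))
  have hf := congrArg (fun p : K[X] => (derivative p).eval 0) (Lagrange.eq_interpolate hv hdeg)
  simp only [f, derivative_pow, Lagrange.interpolate_apply, derivative_sum, eval_finsetSum] at hf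
  simp only [derivative_add, derivative_C, derivative_mul, derivative_X, eval_mul, eval_add,
    eval_pow, eval_C, eval_X, zero_add, zero_mul, one_mul, mul_zero, add_zero] at hf
  rw [hf]
  exact sum_congr rfl fun j _ => mul_comm _ _

open Function

section Nuclear

variable {𝕜 E F : Type} [RCLike 𝕜] [NormedAddCommGroup E] [NormedSpace 𝕜 E]
  [NormedAddCommGroup F] [NormedSpace 𝕜 F]

theorem IsNuclearOp.exists_norm_le_one {u : E → F} (hu : IsNuclearOp 𝕜 u) :
    ∃ (θ : ℕ → E →L[𝕜] 𝕜) (y : ℕ → F), (∀ i, ‖θ i‖ ≤ 1) ∧ Summable (fun i => ‖y i‖) ∧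
      ∀ x, HasSum (fun i => θ i x • y i) (u x) := by
  obtain ⟨θ, y, hsum, hu⟩ := hu
  refine ⟨fun i => (‖θ i‖⁻¹ : 𝕜) • θ i, fun i => (‖θ i‖ : 𝕜) • y i, fun i => ?_, ?_, fun x => ?_⟩
  · rw [norm_smul, norm_inv, RCLike.norm_ofReal, abs_norm]
    exact inv_mul_le_one_of_le₀ le_rfl (norm_nonneg _)
  · simpa only [norm_smul, RCLike.norm_ofReal, abs_norm] using hsum
  · convert hu x using 2 with i
    rcases eq_or_ne (θ i) 0 with h | h
    · simp [h]
    · have : (‖θ i‖ : 𝕜) ≠ 0 := RCLike.ofReal_ne_zero.2 (norm_ne_zero_iff.2 h)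
      rw [smul_apply, smul_smul, smul_eq_mul, mul_right_comm,
        inv_mul_cancel₀ this, one_mul]

theorem summable_norm_apply_pow_smul {ι : Type*} {n : ℕ} {Φ : ι → E →L[𝕜] 𝕜} {z : ι → F}
    (h : Summable fun i => ‖Φ i‖ ^ n * ‖z i‖) (x : E) :
    Summable fun i => ‖(Φ i x) ^ n • z i‖ := by
  refine .of_nonneg_of_le (fun _ => norm_nonneg _) (fun i => ?_) (h.mul_right (‖x‖ ^ n))
  rw [norm_smul, norm_pow, mul_right_comm, ← mul_pow]
  gcongr
  exact (Φ i).le_opNorm x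

theorem isNuclearPoly_of_hasSum {ι : Type*} [Countable ι] {n : ℕ} {P : E → F}
    (Φ : ι → E →L[𝕜] 𝕜) (z : ι → F) (hs : Summable fun i => ‖Φ i‖ ^ n * ‖z i‖)
    (hP : ∀ x, HasSum (fun i => (Φ i x) ^ n • z i) (P x)) : IsNuclearPoly 𝕜 n P := by
  obtain ⟨g, hg⟩ := Countable.exists_injective_nat ι
  have hz : ∀ k ∉ Set.range g, extend g z 0 k = 0 := fun k hk =>
    extend_apply' _ _ _ (by simpa using hk)
  refine ⟨extend g Φ 0, extend g z 0, ?_, fun x => ?_⟩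
  · rw [← hg.summable_iff fun k hk => by simp [hz k hk]]
    simpa [comp_def, hg.extend_apply] using hs
  · rw [← hg.hasSum_iff fun k hk => by simp [hz k hk]]
    simpa [comp_def, hg.extend_apply] using hP x

theorem IsNuclearOp.isNuclearPoly_pow_pred_smul [CompleteSpace F] {u : E → F}
    (hu : IsNuclearOp 𝕜 u) (ψ : E →L[𝕜] 𝕜) {n : ℕ} (hn : n ≠ 0) :
    IsNuclearPoly 𝕜 n fun x => (ψ x) ^ (n - 1) • u x := by
  obtain ⟨θ, y, hθ, hy, hu⟩ := hu.exists_norm_le_one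
  obtain ⟨c, hc⟩ : ∃ c : Fin (n + 1) → 𝕜, ∀ a b : 𝕜,
      ∑ j, c j * (a + j * b) ^ n = a ^ (n - 1) * b := by
    obtain ⟨c, hc⟩ := exists_sum_mul_add_mul_pow_eq 𝕜 n
    refine ⟨fun j => (n : 𝕜)⁻¹ * c j, fun a b => ?_⟩
    simp_rw [mul_assoc, ← Finset.mul_sum, hc]
    field_simp
  let Φ : ℕ × Fin (n + 1) → E →L[𝕜] 𝕜 := fun p => ψ + ((p.2 : ℕ) : 𝕜) • θ p.1
  let z : ℕ × Fin (n + 1) → F := fun p => c p.2 • y p.1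
  have hΦ : ∀ p, ‖Φ p‖ ≤ ‖ψ‖ + n := fun p => by
    refine (norm_add_le _ _).trans ?_
    rw [norm_smul, RCLike.norm_natCast]
    gcongr
    simpa using mul_le_mul (by exact_mod_cast p.2.is_le : ((p.2 : ℕ) : ℝ) ≤ n) (hθ p.1)
      (norm_nonneg _) (Nat.cast_nonneg n)
  have hs : Summable fun p => ‖Φ p‖ ^ n * ‖z p‖ := by
    have hbound : Summable fun p : ℕ × Fin (n + 1) => (‖ψ‖ + n) ^ n * ‖y p.1‖ * ‖c p.2‖ :=
      Summable.mul_of_nonneg (f := fun i => (‖ψ‖ + n) ^ n * ‖y i‖) (g := fun j => ‖c j‖)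
        (hy.mul_left _) .of_finite (fun _ => by positivity) (fun _ => norm_nonneg _)
    refine .of_nonneg_of_le (fun _ => by positivity) (fun p => ?_) hbound
    rw [norm_smul, mul_comm ‖_‖ ‖y _‖, ← mul_assoc]
    gcongr
    exact hΦ p
  refine isNuclearPoly_of_hasSum Φ z hs fun x => ?_
  have hfiber (i : ℕ) :
      HasSum (fun j => (Φ (i, j) x) ^ n • z (i, j)) ((ψ x) ^ (n - 1) • θ i x • y i) := by
    convert hasSum_fintype (fun j => (Φ (i, j) x) ^ n • z (i, j)) using 1
    simp only [Φ, z, add_apply, smul_apply, smul_eq_mul, smul_smul, ← Finset.sum_smul,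
      mul_comm _ (c _), hc]
  have hsum := (summable_norm_apply_pow_smul hs x).of_norm.hasSum
  rwa [(hsum.prod_fiberwise hfiber).unique ((hu x).const_smul _)] at hsum

end Nuclear

theorem nuclear_op_power_poly_nuclear_general {𝕜 E F : Type} [RCLike 𝕜]
    [NormedAddCommGroup E] [NormedSpace 𝕜 E]
    [NormedAddCommGroup F] [NormedSpace 𝕜 F] [CompleteSpace F]
    (u : E →L[𝕜] F) (hu : IsNuclearOp 𝕜 ⇑u) (φ : F →L[𝕜] 𝕜)
    (n : ℕ) (hn : 1 ≤ n) :
    IsNuclearPoly 𝕜 n (fun x => (φ (u x)) ^ (n - 1) • u x) :=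
  hu.isNuclearPoly_pow_pred_smul (φ.comp u) (Nat.one_le_iff_ne_zero.mp hn)

/-- If `u : E → F` is nuclear and `φ ∈ F'` is nonzero, then for every `n ≥ 1` the
`n`-homogeneous polynomial `P(x) = φ(u x)^{n-1} • u x` is nuclear. -/
theorem nuclear_op_power_poly_nuclear {𝕜 E F : Type} [RCLike 𝕜]
    [NormedAddCommGroup E] [NormedSpace 𝕜 E] [CompleteSpace E]
    [NormedAddCommGroup F] [NormedSpace 𝕜 F] [CompleteSpace F]
    (u : E →L[𝕜] F) (hu : IsNuclearOp 𝕜 ⇑u) (φ : F →L[𝕜] 𝕜) (hφ : φ ≠ 0)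
    (n : ℕ) (hn : 1 ≤ n) :
    IsNuclearPoly 𝕜 n (fun x => (φ (u x)) ^ (n - 1) • u x) :=
  nuclear_op_power_poly_nuclear_general u hu φ n hn
end

section
/- Let I0, I1, I2 be operator/polynomial ideals and n ≥ 1. Suppose every n-homogeneous polynomial P : E → F lying in P_{L[I0]}(^nE;F) ∩ P_{L[I1]}(^nE;F) belongs to P_{I2}(^nE;F), and suppose that for every P ∈ P_{I2}(^nE;F) and a ∈ E the operator x ↦ P̌(x,a,...,a) lies in L_{I2}(E;F). Then L_{I0}(E;F) ∩ L_{I1}(E;F) ⊆ L_{I2}(E;F). -/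
open TrivSqZeroExt

section PolarizedPowSmul

variable {𝕜 E F : Type} [RCLike 𝕜] [NormedAddCommGroup E] [NormedSpace 𝕜 E]
  [NormedAddCommGroup F] [NormedSpace 𝕜 F]

/- `TrivSqZeroExt 𝕜 F` is a commutative ring only once `F` carries a right `𝕜`-action agreeing
with the left one; over a commutative field we simply declare the left action to be it. -/
abbrev opModuleOfComm : Module 𝕜ᵐᵒᵖ F :=
  Module.compHom F (RingEquiv.toOpposite 𝕜).symm.toRingHom

attribute [local instance] opModuleOfComm

theorem isCentralScalar_opModuleOfComm : IsCentralScalar 𝕜 F := ⟨fun _ _ => rfl⟩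

attribute [local instance] isCentralScalar_opModuleOfComm

noncomputable def dualLift (φ : F →L[𝕜] 𝕜) : F →L[𝕜] TrivSqZeroExt 𝕜 F :=
  (inlCLM 𝕜 F).comp φ + inrCLM 𝕜 F

@[simp] theorem fst_dualLift (φ : F →L[𝕜] 𝕜) (y : F) : fst (dualLift φ y) = φ y := by
  simp [dualLift]

@[simp] theorem snd_dualLift (φ : F →L[𝕜] 𝕜) (y : F) : snd (dualLift φ y) = y := by
  simp [dualLift]

/-- The multilinear map `y ↦ ∑ k, (∏ i ≠ k, φ (y i)) • y k`, i.e. `n` times the polarization of the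
homogeneous polynomial `y ↦ φ y ^ (n - 1) • y`. It is the `ε`-part of `∏ i, (φ (y i) + ε y i)` in
the dual numbers `𝕜 ⊕ ε F`, which makes it symmetric and continuous for free. -/
noncomputable def polarizedPowSmul (φ : F →L[𝕜] 𝕜) (n : ℕ) :
    ContinuousMultilinearMap 𝕜 (fun _ : Fin n => F) F :=
  (sndCLM 𝕜 F).compContinuousMultilinearMap
    ((ContinuousMultilinearMap.mkPiAlgebra 𝕜 (Fin n) (TrivSqZeroExt 𝕜 F)).compContinuousLinearMap
      fun _ => dualLift φ)

theorem polarizedPowSmul_apply (φ : F →L[𝕜] 𝕜) {n : ℕ} (y : Fin n → F) :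
    polarizedPowSmul φ n y = snd (∏ i, dualLift φ (y i)) := rfl

theorem isSymMap_polarizedPowSmul_comp (φ : F →L[𝕜] 𝕜) (n : ℕ) (T : E →L[𝕜] F) :
    IsSymMap n ((polarizedPowSmul φ n).compContinuousLinearMap fun _ => T) :=
  fun σ x => congrArg snd (Equiv.prod_comp σ fun i => dualLift φ (T (x i)))

theorem exists_polarizedPowSmul_apply_ite (φ : F →L[𝕜] 𝕜) (m : ℕ) (b : F) :
    ∃ w : F, ∀ v : F, polarizedPowSmul φ (m + 1) (fun i => if (i : ℕ) = 0 then v else b)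
      = φ b ^ m • v + φ v • w := by
  refine ⟨snd (dualLift φ b ^ m), fun v => ?_⟩
  simp only [polarizedPowSmul_apply, Fin.prod_univ_succ, Fin.val_zero, Fin.val_succ,
    if_true, Nat.succ_ne_zero, if_false, Finset.prod_const, Finset.card_univ, Fintype.card_fin,
    snd_mul, fst_pow]
  rw [fst_dualLift, snd_dualLift, fst_dualLift, op_smul_eq_smul, add_comm]

end PolarizedPowSmul

theorem linear_inclusion_of_factorization_inclusion_general {𝕜 E : Type} [RCLike 𝕜]
    [NormedAddCommGroup E] [NormedSpace 𝕜 E]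
    (Fb : BanachSpaceOver 𝕜) (n : ℕ) (hn : 1 ≤ n)
    (I0 I1 : ∀ G : BanachSpaceOver 𝕜, Set (E →L[𝕜] G.carrier))
    (I2n I2lin : Set (E → Fb.carrier))
    (hsub : ∀ P : E → Fb.carrier,
      (∃ (G : BanachSpaceOver 𝕜) (u : E →L[𝕜] G.carrier)
        (Q : ContinuousMultilinearMap 𝕜 (fun _ : Fin n => G.carrier) Fb.carrier),
        u ∈ I0 G ∧ ∀ x, P x = Q fun _ => u x) →
      (∃ (G : BanachSpaceOver 𝕜) (u : E →L[𝕜] G.carrier)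
        (Q : ContinuousMultilinearMap 𝕜 (fun _ : Fin n => G.carrier) Fb.carrier),
        u ∈ I1 G ∧ ∀ x, P x = Q fun _ => u x) →
      P ∈ I2n)
    (hi : ∀ T : ContinuousMultilinearMap 𝕜 (fun _ : Fin n => E) Fb.carrier,
        IsSymMap n T → (fun x => T fun _ => x) ∈ I2n →
        ∀ a : E, (fun x => T fun i => if (i : ℕ) = 0 then x else a) ∈ I2lin)
    (hrank : ∀ (ψ : E →L[𝕜] 𝕜) (y : Fb.carrier), (fun x => ψ x • y) ∈ I2lin)
    (hlin : ∀ f g : E → Fb.carrier, f ∈ I2lin → g ∈ I2lin → ∀ c d : 𝕜,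
        (fun x => c • f x + d • g x) ∈ I2lin) :
    ∀ T : E →L[𝕜] Fb.carrier, T ∈ I0 Fb → T ∈ I1 Fb → ⇑T ∈ I2lin := by
  intro T hT0 hT1
  obtain ⟨m, rfl⟩ := Nat.exists_eq_add_of_le' hn
  rcases eq_or_ne T 0 with rfl | hT
  · simpa [Pi.zero_def] using hrank 0 0
  obtain ⟨a, ha⟩ : ∃ a, T a ≠ 0 := by
    by_contra! h
    exact hT (ContinuousLinearMap.ext h)
  obtain ⟨φ, hφ⟩ := SeparatingDual.exists_ne_zero (R := 𝕜) ha
  set M := (polarizedPowSmul φ (m + 1)).compContinuousLinearMap fun _ => T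
  have hP : (fun x => M fun _ => x) ∈ I2n :=
    hsub _ ⟨Fb, T, polarizedPowSmul φ _, hT0, fun _ => rfl⟩
      ⟨Fb, T, polarizedPowSmul φ _, hT1, fun _ => rfl⟩
  have hslice := hi M (isSymMap_polarizedPowSmul_comp φ _ T) hP a
  obtain ⟨w, hw⟩ := exists_polarizedPowSmul_apply_ite φ m (T a)
  convert hlin _ _ hslice (hrank (φ.comp T) w) (φ (T a) ^ m)⁻¹ (-(φ (T a) ^ m)⁻¹) using 1
  funext x
  have hMx : (M fun i => if (i : ℕ) = 0 then x else a) = φ (T a) ^ m • T x + φ (T x) • w := by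
    simpa [M, apply_ite T] using hw (T x)
  rw [hMx, smul_add, smul_smul, inv_mul_cancel₀ (pow_ne_zero m hφ)]
  simp

/-- Lemma 3 of the paper: if `P_{L[I0]}(^nE;F) ∩ P_{L[I1]}(^nE;F) ⊆ P_{I2}(^nE;F)` and
polynomials of `I2` linearize (fixing `a` in all slots but one) into the linear component
`L_{I2}(E;F)`, then `L_{I0}(E;F) ∩ L_{I1}(E;F) ⊆ L_{I2}(E;F)`. The ideal properties of the
linear component of `I2` (subspace containing rank-one operators) are explicit hypotheses. -/
theorem linear_inclusion_of_factorization_inclusion {𝕜 E : Type} [RCLike 𝕜]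
    [NormedAddCommGroup E] [NormedSpace 𝕜 E] [CompleteSpace E]
    (Fb : BanachSpaceOver 𝕜) (n : ℕ) (hn : 1 ≤ n)
    (I0 I1 : ∀ G : BanachSpaceOver 𝕜, Set (E →L[𝕜] G.carrier))
    (I2n I2lin : Set (E → Fb.carrier))
    (hsub : ∀ P : E → Fb.carrier,
      (∃ (G : BanachSpaceOver 𝕜) (u : E →L[𝕜] G.carrier)
        (Q : ContinuousMultilinearMap 𝕜 (fun _ : Fin n => G.carrier) Fb.carrier),
        u ∈ I0 G ∧ ∀ x, P x = Q fun _ => u x) →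
      (∃ (G : BanachSpaceOver 𝕜) (u : E →L[𝕜] G.carrier)
        (Q : ContinuousMultilinearMap 𝕜 (fun _ : Fin n => G.carrier) Fb.carrier),
        u ∈ I1 G ∧ ∀ x, P x = Q fun _ => u x) →
      P ∈ I2n)
    (hi : ∀ T : ContinuousMultilinearMap 𝕜 (fun _ : Fin n => E) Fb.carrier,
        IsSymMap n T → (fun x => T fun _ => x) ∈ I2n →
        ∀ a : E, (fun x => T fun i => if (i : ℕ) = 0 then x else a) ∈ I2lin)
    (hrank : ∀ (ψ : E →L[𝕜] 𝕜) (y : Fb.carrier), (fun x => ψ x • y) ∈ I2lin)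
    (hlin : ∀ f g : E → Fb.carrier, f ∈ I2lin → g ∈ I2lin → ∀ c d : 𝕜,
        (fun x => c • f x + d • g x) ∈ I2lin) :
    ∀ T : E →L[𝕜] Fb.carrier, T ∈ I0 Fb → T ∈ I1 Fb → ⇑T ∈ I2lin :=
  linear_inclusion_of_factorization_inclusion_general Fb n hn I0 I1 I2n I2lin hsub hi hrank hlin
end

section
/- For 2 ≤ m and the 2-homogeneous polynomial P(x) = Σ_j j^{-α} x_j² on ℓ² with α = 1/2 + ε, 0 < ε < 1/2: the linearization Ψ₁(P̌) : ℓ² → (ℓ²)' ≅ ℓ² of the associated symmetric bilinear form P̌(x,y) = Σ_j j^{-α}x_j y_j is the diagonal operator (x_j) ↦ (j^{-α}x_j), which is absolutely 1-summing; hence P is of type [as,1] while P is not 1-dominated. In particular the class of polynomials of type [as,1] strictly contains the class of 1-dominated polynomials on ℓ². -/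
open MeasureTheory

/-- `u` is absolutely 1-summing: `Σ ‖u x_j‖ ≤ C · sup_{‖φ‖≤1} Σ |φ x_j|` for all finite
families (the supremum is encoded by quantifying over all upper bounds `r`). -/
def IsSumming1 (𝕜 : Type) [RCLike 𝕜] {E F : Type} [NormedAddCommGroup E] [NormedSpace 𝕜 E]
    [NormedAddCommGroup F] [NormedSpace 𝕜 F] (u : E → F) : Prop :=
  ∃ C : ℝ, 0 ≤ C ∧ ∀ (k : ℕ) (x : Fin k → E) (r : ℝ),
    (∀ φ : E →L[𝕜] 𝕜, ‖φ‖ ≤ 1 → ∑ j, ‖φ (x j)‖ ≤ r) → ∑ j, ‖u (x j)‖ ≤ C * r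

/-! The diagonal operator `x ↦ ((j+1)^{-α} x_j)` is Hilbert–Schmidt because `2α > 1`. Khintchine's
inequality `‖a‖₂ ≤ √3 · 𝔼 |∑ ±aⱼ|`, obtained from the second and fourth moments of Rademacher
sums, writes `∑ₖ ‖D xₖ‖` as an average of `∑ₖ |⟪c, xₖ⟫|` over the vectors `c = (±dⱼ)`, all of norm
at most `‖d‖₂`; hence `Ψ₁(P̌)` is absolutely 1-summing.

A 1-domination of `P` would give `∑_{j<k} ‖P eⱼ‖^{1/2} ≤ C ‖(eⱼ)_{j<k}‖_{w,1} ≤ C √k`, the last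
step by Bessel's inequality, whereas the left side is at least `k^{1-α/2}` and `1 - α/2 > 1/2`. -/

open Finset Filter Topology
open scoped InnerProductSpace lp ComplexConjugate

lemma sum_sq_pow_three_le {ι : Type*} {f : ι → ℝ} {s : Finset ι} (hf : ∀ i ∈ s, 0 ≤ f i) :
    (∑ i ∈ s, f i ^ 2) ^ 3 ≤ (∑ i ∈ s, f i) ^ 2 * ∑ i ∈ s, f i ^ 4 := by
  have h13 : (∑ i ∈ s, f i ^ 2) ^ 2 ≤ (∑ i ∈ s, f i) * ∑ i ∈ s, f i ^ 3 :=
    sum_sq_le_sum_mul_sum_of_sq_le_mul s hf (fun i hi => pow_nonneg (hf i hi) 3)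
      fun i _ => le_of_eq (by ring)
  have h24 : (∑ i ∈ s, f i ^ 3) ^ 2 ≤ (∑ i ∈ s, f i ^ 2) * ∑ i ∈ s, f i ^ 4 :=
    sum_sq_le_sum_mul_sum_of_sq_le_mul s (fun i _ => sq_nonneg _)
      (fun i hi => pow_nonneg (hf i hi) 4) fun i _ => le_of_eq (by ring)
  set S2 := ∑ i ∈ s, f i ^ 2
  have hS2 : 0 ≤ S2 := sum_nonneg fun i _ => sq_nonneg _
  rcases hS2.eq_or_lt with h0 | hpos
  · rw [← h0, zero_pow three_ne_zero]
    positivity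
  · refine le_of_mul_le_mul_left ?_ hpos
    calc S2 * S2 ^ 3 = (S2 ^ 2) ^ 2 := by ring
      _ ≤ ((∑ i ∈ s, f i) * ∑ i ∈ s, f i ^ 3) ^ 2 := pow_le_pow_left₀ (sq_nonneg _) h13 2
      _ = (∑ i ∈ s, f i) ^ 2 * (∑ i ∈ s, f i ^ 3) ^ 2 := by ring
      _ ≤ (∑ i ∈ s, f i) ^ 2 * (S2 * ∑ i ∈ s, f i ^ 4) := by gcongr
      _ = S2 * ((∑ i ∈ s, f i) ^ 2 * ∑ i ∈ s, f i ^ 4) := by ring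

section Khintchine

/-- A subset `t ⊆ s` encodes the signs `+1` on `t` and `-1` on `s \ t`, so summing over
`s.powerset` is `2 ^ #s` times the Rademacher average. -/
def signedSum {ι E : Type*} [DecidableEq ι] [AddCommGroup E] (a : ι → E) (s t : Finset ι) : E :=
  ∑ i ∈ s, if i ∈ t then a i else -a i

variable {ι E : Type*} [DecidableEq ι]

lemma sum_powerset_insert_signedSum [AddCommGroup E] {M : Type*} [AddCommMonoid M]
    (f : E → M) (a : ι → E) {s : Finset ι} {i : ι} (hi : i ∉ s) :
    ∑ t ∈ (insert i s).powerset, f (signedSum a (insert i s) t) =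
      ∑ t ∈ s.powerset, (f (signedSum a s t - a i) + f (signedSum a s t + a i)) := by
  rw [sum_powerset_insert hi, ← sum_add_distrib]
  refine sum_congr rfl fun t ht => ?_
  have hit : i ∉ t := fun h => hi (mem_powerset.1 ht h)
  have hrest : ∀ t' : Finset ι, signedSum a (insert i s) t' =
      (if i ∈ t' then a i else -a i) + ∑ j ∈ s, if j ∈ t' then a j else -a j :=
    fun t' => sum_insert hi
  have hagree : ∀ j ∈ s, (if j ∈ insert i t then a j else -a j) = if j ∈ t then a j else -a j :=
    fun j hj => by simp only [mem_insert, ne_of_mem_of_not_mem hj hi, false_or]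
  rw [hrest, hrest, if_neg hit, if_pos (mem_insert_self i t), sum_congr rfl hagree, signedSum,
    neg_add_eq_sub, add_comm (a i)]

variable [NormedAddCommGroup E] [InnerProductSpace ℝ E]

lemma sum_powerset_norm_signedSum_sq (a : ι → E) (s : Finset ι) :
    ∑ t ∈ s.powerset, ‖signedSum a s t‖ ^ 2 = 2 ^ s.card * ∑ i ∈ s, ‖a i‖ ^ 2 := by
  induction s using Finset.induction_on with
  | empty => simp [signedSum]
  | insert i s hi ih =>
    rw [sum_powerset_insert_signedSum (‖·‖ ^ 2) a hi, card_insert_of_notMem hi, sum_insert hi]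
    have hpar : ∀ t, ‖signedSum a s t - a i‖ ^ 2 + ‖signedSum a s t + a i‖ ^ 2 =
        2 * ‖signedSum a s t‖ ^ 2 + 2 * ‖a i‖ ^ 2 := fun t => by
      linarith [parallelogram_law_with_norm ℝ (signedSum a s t) (a i)]
    simp only [hpar, sum_add_distrib, ← mul_sum, ih, sum_const, card_powerset, nsmul_eq_mul]
    push_cast
    ring

lemma norm_sub_pow_four_add_norm_add_pow_four_le (z b : E) :
    ‖z - b‖ ^ 4 + ‖z + b‖ ^ 4 ≤ 2 * ‖z‖ ^ 4 + 12 * ‖z‖ ^ 2 * ‖b‖ ^ 2 + 2 * ‖b‖ ^ 4 := by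
  have hadd := norm_add_sq_real z b
  have hsub := norm_sub_sq_real z b
  have hcs : |inner ℝ z b| ≤ ‖z‖ * ‖b‖ := abs_real_inner_le_norm z b
  have hcs2 : inner ℝ z b ^ 2 ≤ (‖z‖ * ‖b‖) ^ 2 := sq_le_sq' (abs_le.1 hcs).1 (abs_le.1 hcs).2
  have h4 : ∀ y : E, ‖y‖ ^ 4 = (‖y‖ ^ 2) ^ 2 := fun y => by ring
  rw [h4 (z - b), h4 (z + b), hadd, hsub]
  nlinarith [hcs2]

lemma sum_powerset_norm_signedSum_pow_four_le (a : ι → E) (s : Finset ι) :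
    ∑ t ∈ s.powerset, ‖signedSum a s t‖ ^ 4 ≤ 3 * 2 ^ s.card * (∑ i ∈ s, ‖a i‖ ^ 2) ^ 2 := by
  induction s using Finset.induction_on with
  | empty => simp [signedSum]
  | insert i s hi ih =>
    rw [sum_powerset_insert_signedSum (‖·‖ ^ 4) a hi, card_insert_of_notMem hi, sum_insert hi]
    set A := ∑ j ∈ s, ‖a j‖ ^ 2
    calc ∑ t ∈ s.powerset, (‖signedSum a s t - a i‖ ^ 4 + ‖signedSum a s t + a i‖ ^ 4)
        ≤ ∑ t ∈ s.powerset, (2 * ‖signedSum a s t‖ ^ 4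
            + 12 * ‖a i‖ ^ 2 * ‖signedSum a s t‖ ^ 2 + 2 * ‖a i‖ ^ 4) :=
          sum_le_sum fun t _ => by
            linarith [norm_sub_pow_four_add_norm_add_pow_four_le (signedSum a s t) (a i)]
      _ = 2 * ∑ t ∈ s.powerset, ‖signedSum a s t‖ ^ 4
            + 12 * ‖a i‖ ^ 2 * (2 ^ s.card * A) + 2 ^ s.card * (2 * ‖a i‖ ^ 4) := by
          rw [sum_add_distrib, sum_add_distrib, ← mul_sum, ← mul_sum,
            sum_powerset_norm_signedSum_sq, sum_const, card_powerset, nsmul_eq_mul]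
          push_cast
          ring
      _ ≤ 3 * 2 ^ (s.card + 1) * (‖a i‖ ^ 2 + A) ^ 2 := by
          have h2 : (0 : ℝ) ≤ 2 ^ s.card := by positivity
          have hA : 0 ≤ A := sum_nonneg fun j _ => sq_nonneg _
          rw [pow_succ (2 : ℝ) s.card]
          nlinarith [mul_nonneg h2 (mul_nonneg hA (sq_nonneg ‖a i‖)),
            mul_nonneg h2 (sq_nonneg (‖a i‖ ^ 2))]

theorem khintchine_sqrt_sum_sq_le (a : ι → E) (s : Finset ι) :
    2 ^ s.card * √(∑ i ∈ s, ‖a i‖ ^ 2) ≤ √3 * ∑ t ∈ s.powerset, ‖signedSum a s t‖ := by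
  set A := ∑ i ∈ s, ‖a i‖ ^ 2
  set T := ∑ t ∈ s.powerset, ‖signedSum a s t‖
  have hA : 0 ≤ A := sum_nonneg fun i _ => sq_nonneg _
  have h2 : (0 : ℝ) < 2 ^ s.card := by positivity
  have hmoments : (2 ^ s.card * A) ^ 3 ≤ T ^ 2 * (3 * 2 ^ s.card * A ^ 2) := by
    rw [← sum_powerset_norm_signedSum_sq]
    exact (sum_sq_pow_three_le fun t _ => norm_nonneg _).trans
      (by gcongr; exact sum_powerset_norm_signedSum_pow_four_le a s)
  have hsq : (2 ^ s.card * √A) ^ 2 ≤ (√3 * T) ^ 2 := by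
    rw [mul_pow, mul_pow, Real.sq_sqrt hA, Real.sq_sqrt (by norm_num)]
    rcases hA.eq_or_lt with h0 | hpos
    · rw [← h0, mul_zero]; positivity
    · refine le_of_mul_le_mul_left ?_ (mul_pos h2 (pow_pos hpos 2))
      linear_combination hmoments
  exact (pow_le_pow_iff_left₀ (by positivity) (by positivity) two_ne_zero).1 hsq

end Khintchine

section Summing

variable {𝕜 : Type} [RCLike 𝕜] {E F : Type} [NormedAddCommGroup E] [NormedAddCommGroup F]
  [NormedSpace 𝕜 F]

lemma sum_norm_apply_le_opNorm_mul [NormedSpace 𝕜 E] {k : ℕ} {x : Fin k → E} {r : ℝ}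
    (hr : ∀ φ : E →L[𝕜] 𝕜, ‖φ‖ ≤ 1 → ∑ j, ‖φ (x j)‖ ≤ r) (φ : E →L[𝕜] 𝕜) :
    ∑ j, ‖φ (x j)‖ ≤ ‖φ‖ * r := by
  rcases (norm_nonneg φ).eq_or_lt with h0 | hpos
  · have hφ : φ = 0 := norm_eq_zero.1 h0.symm
    simp [hφ]
  · have hψ : ‖(‖φ‖⁻¹ : 𝕜) • φ‖ ≤ 1 := by
      rw [norm_smul, norm_inv, norm_algebraMap', norm_norm, inv_mul_cancel₀ hpos.ne']
    have h := hr _ hψ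
    simp only [smul_apply, norm_smul, norm_inv, norm_algebraMap', norm_norm,
      ← mul_sum] at h
    rwa [inv_mul_le_iff₀ hpos] at h

variable [InnerProductSpace 𝕜 E] {ι : Type*}

lemma sum_sqrt_sum_sq_inner_le [DecidableEq ι] {v : ι → E} (hv : Orthonormal 𝕜 v) (d : ι → ℝ)
    (s : Finset ι) {k : ℕ} (x : Fin k → E) {r : ℝ}
    (hr : ∀ φ : E →L[𝕜] 𝕜, ‖φ‖ ≤ 1 → ∑ j, ‖φ (x j)‖ ≤ r) :
    ∑ j, √(∑ i ∈ s, (d i * ‖⟪v i, x j⟫_𝕜‖) ^ 2) ≤ √3 * √(∑ i ∈ s, d i ^ 2) * r := by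
  let σ (t : Finset ι) (i : ι) : 𝕜 := if i ∈ t then (d i : 𝕜) else -(d i : 𝕜)
  let c (t : Finset ι) : E := ∑ i ∈ s, σ t i • v i
  have hc : ∀ t, ‖c t‖ = √(∑ i ∈ s, d i ^ 2) := fun t => by
    have h := hv.orthogonalFamily.norm_sum (σ t) s
    simp only [LinearIsometry.toSpanSingleton_apply] at h
    have hσ : ∀ i, ‖σ t i‖ ^ 2 = d i ^ 2 := fun i => by by_cases hi : i ∈ t <;> simp [σ, hi]
    rw [← Real.sqrt_sq (norm_nonneg (c t)), h, sum_congr rfl fun i _ => hσ i]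
  have hinner : ∀ t y, ⟪c t, y⟫_𝕜 = signedSum (fun i => (d i : 𝕜) * ⟪v i, y⟫_𝕜) s t :=
    fun t y => by
      simp only [c, sum_inner, inner_smul_left, signedSum]
      refine sum_congr rfl fun i _ => ?_
      by_cases hi : i ∈ t <;> simp [σ, hi]
  have hK : ∀ j, 2 ^ s.card * √(∑ i ∈ s, (d i * ‖⟪v i, x j⟫_𝕜‖) ^ 2) ≤
      √3 * ∑ t ∈ s.powerset, ‖⟪c t, x j⟫_𝕜‖ := fun j => by
    simpa only [hinner, norm_mul, RCLike.norm_ofReal, sq_abs, mul_pow] using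
      khintchine_sqrt_sum_sq_le (fun i => (d i : 𝕜) * ⟪v i, x j⟫_𝕜) s
  have hbound : ∀ t, ∑ j, ‖⟪c t, x j⟫_𝕜‖ ≤ √(∑ i ∈ s, d i ^ 2) * r := fun t => by
    simpa only [innerSL_apply_norm, innerSL_apply_apply, hc] using
      sum_norm_apply_le_opNorm_mul hr (innerSL 𝕜 (c t))
  refine le_of_mul_le_mul_left ?_ (by positivity : (0 : ℝ) < 2 ^ s.card)
  calc 2 ^ s.card * ∑ j, √(∑ i ∈ s, (d i * ‖⟪v i, x j⟫_𝕜‖) ^ 2)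
      ≤ ∑ j, √3 * ∑ t ∈ s.powerset, ‖⟪c t, x j⟫_𝕜‖ := by
        rw [mul_sum]; exact sum_le_sum fun j _ => hK j
    _ = √3 * ∑ t ∈ s.powerset, ∑ j, ‖⟪c t, x j⟫_𝕜‖ := by rw [← mul_sum, sum_comm]
    _ ≤ √3 * ∑ t ∈ s.powerset, √(∑ i ∈ s, d i ^ 2) * r := by gcongr with t; exact hbound t
    _ = 2 ^ s.card * (√3 * √(∑ i ∈ s, d i ^ 2) * r) := by
        rw [sum_const, card_powerset, nsmul_eq_mul]; push_cast; ring

theorem isSumming1_of_norm_le_sqrt_tsum {v : ι → E} (hv : Orthonormal 𝕜 v) {d : ι → ℝ}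
    (hd : Summable fun i => d i ^ 2) {u : E → F}
    (hu : ∀ x, ‖u x‖ ≤ √(∑' i, (d i * ‖⟪v i, x⟫_𝕜‖) ^ 2)) : IsSumming1 𝕜 u := by
  classical
  refine ⟨√3 * √(∑' i, d i ^ 2), by positivity, fun k x r hr => ?_⟩
  have hr0 : 0 ≤ r := by simpa using hr 0 (by simp)
  have hsummable : ∀ y, Summable fun i => (d i * ‖⟪v i, y⟫_𝕜‖) ^ 2 := fun y =>
    (hd.mul_right (‖y‖ ^ 2)).of_nonneg_of_le (fun i => sq_nonneg _) fun i => by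
      rw [mul_pow]
      gcongr
      simpa [hv.norm_eq_one] using norm_inner_le_norm (v i) y
  have hlim : Tendsto (fun s : Finset ι => ∑ j, √(∑ i ∈ s, (d i * ‖⟪v i, x j⟫_𝕜‖) ^ 2)) atTop
      (𝓝 (∑ j, √(∑' i, (d i * ‖⟪v i, x j⟫_𝕜‖) ^ 2))) :=
    tendsto_finsetSum _ fun j _ => (hsummable (x j)).hasSum.sqrt
  calc ∑ j, ‖u (x j)‖ ≤ ∑ j, √(∑' i, (d i * ‖⟪v i, x j⟫_𝕜‖) ^ 2) := sum_le_sum fun j _ => hu _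
    _ ≤ √3 * √(∑' i, d i ^ 2) * r := le_of_tendsto' hlim fun s =>
        (sum_sqrt_sum_sq_inner_le hv d s x hr).trans (by
          gcongr
          exact hd.sum_le_tsum s fun i _ => sq_nonneg _)

end Summing

section Dominated

variable {𝕜 : Type} [RCLike 𝕜] {E F : Type} [NormedAddCommGroup E] [NormedAddCommGroup F]
  [NormedSpace 𝕜 F]

instance [NormedSpace 𝕜 E] : BorelSpace (dualBall 𝕜 E) := ⟨rfl⟩

lemma continuous_norm_dualBall_apply [NormedSpace 𝕜 E] (x : E) :
    Continuous fun φ : dualBall 𝕜 E => ‖(φ : WeakDual 𝕜 E) x‖ :=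
  ((WeakDual.eval_continuous x).comp continuous_subtype_val).norm

theorem IsDominated1.exists_sum_rpow_le [NormedSpace 𝕜 E] {m : ℕ} (hm : m ≠ 0) {P : E → F}
    (hP : IsDominated1 𝕜 m P) (ι : Type*) :
    ∃ C, 0 ≤ C ∧ ∀ (s : Finset ι) (x : ι → E) (r : ℝ),
      (∀ φ ∈ dualBall 𝕜 E, ∑ i ∈ s, ‖φ (x i)‖ ≤ r) → ∑ i ∈ s, ‖P (x i)‖ ^ (m : ℝ)⁻¹ ≤ C * r := by
  obtain ⟨C, μ, hC, hμ, -, hPμ⟩ := hP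
  refine ⟨C ^ (m : ℝ)⁻¹, by positivity, fun s x r hr => ?_⟩
  have hint : ∀ y, Integrable (fun φ : dualBall 𝕜 E => ‖(φ : WeakDual 𝕜 E) y‖) μ := fun y =>
    (integrable_const ‖y‖).mono' (continuous_norm_dualBall_apply y).aestronglyMeasurable
      (.of_forall fun φ => by rw [norm_norm]; exact φ.2 y)
  have hpoint : ∀ y, ‖P y‖ ^ (m : ℝ)⁻¹ ≤ C ^ (m : ℝ)⁻¹ * ∫ φ, ‖(φ : WeakDual 𝕜 E) y‖ ∂μ :=
    fun y => by
      have hI : 0 ≤ ∫ φ, ‖(φ : WeakDual 𝕜 E) y‖ ∂μ := integral_nonneg fun _ => norm_nonneg _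
      calc ‖P y‖ ^ (m : ℝ)⁻¹ ≤ (C * (∫ φ, ‖(φ : WeakDual 𝕜 E) y‖ ∂μ) ^ m) ^ (m : ℝ)⁻¹ := by
            gcongr; exact hPμ y
        _ = C ^ (m : ℝ)⁻¹ * ∫ φ, ‖(φ : WeakDual 𝕜 E) y‖ ∂μ := by
            rw [Real.mul_rpow hC (pow_nonneg hI m), Real.pow_rpow_inv_natCast hI hm]
  calc ∑ i ∈ s, ‖P (x i)‖ ^ (m : ℝ)⁻¹
      ≤ C ^ (m : ℝ)⁻¹ * ∫ φ, ∑ i ∈ s, ‖(φ : WeakDual 𝕜 E) (x i)‖ ∂μ := by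
        rw [integral_finsetSum _ fun i _ => hint (x i), mul_sum]
        exact sum_le_sum fun i _ => hpoint (x i)
    _ ≤ C ^ (m : ℝ)⁻¹ * r := by
        gcongr
        calc ∫ φ, ∑ i ∈ s, ‖(φ : WeakDual 𝕜 E) (x i)‖ ∂μ ≤ ∫ _, r ∂μ :=
              integral_mono (integrable_finsetSum _ fun i _ => hint (x i)) (integrable_const r)
                fun φ => hr φ φ.2
          _ = r := by simp

lemma norm_toStrongDual_le_one [NormedSpace 𝕜 E] {φ : WeakDual 𝕜 E} (hφ : φ ∈ dualBall 𝕜 E) :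
    ‖WeakDual.toStrongDual φ‖ ≤ 1 :=
  ContinuousLinearMap.opNorm_le_bound _ zero_le_one fun x => by simpa using hφ x

variable [InnerProductSpace 𝕜 E]

lemma Orthonormal.sum_norm_apply_le_sqrt_card [CompleteSpace E] {ι : Type*} {v : ι → E}
    (hv : Orthonormal 𝕜 v) {φ : StrongDual 𝕜 E} (hφ : ‖φ‖ ≤ 1) (s : Finset ι) :
    ∑ i ∈ s, ‖φ (v i)‖ ≤ √s.card := by
  set w := (InnerProductSpace.toDual 𝕜 E).symm φ
  have hw : ‖w‖ ≤ 1 := by rwa [LinearIsometryEquiv.norm_map]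
  have hφw : ∀ i, ‖φ (v i)‖ = ‖⟪v i, w⟫_𝕜‖ := fun i => by
    rw [← InnerProductSpace.toDual_symm_apply, norm_inner_symm]
  have hbessel : ∑ i ∈ s, ‖⟪v i, w⟫_𝕜‖ ^ 2 ≤ 1 :=
    (hv.sum_inner_products_le w).trans (pow_le_one₀ (norm_nonneg _) hw)
  rw [sum_congr rfl fun i _ => hφw i]
  refine Real.le_sqrt_of_sq_le (sq_sum_le_card_mul_sum_sq.trans ?_)
  simpa using mul_le_mul_of_nonneg_left hbessel (Nat.cast_nonneg s.card)

end Dominated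

lemma exists_nat_mul_rpow_lt_rpow {a b : ℝ} (hab : a < b) (C : ℝ) :
    ∃ k : ℕ, C * (k : ℝ) ^ a < (k : ℝ) ^ b := by
  have hgrowth := (tendsto_rpow_atTop (sub_pos.2 hab)).comp tendsto_natCast_atTop_atTop
  obtain ⟨k, hkC, hk1⟩ := ((hgrowth.eventually_gt_atTop C).and (eventually_ge_atTop 1)).exists
  have hk : (0 : ℝ) < k := by exact_mod_cast hk1
  refine ⟨k, ?_⟩
  calc C * (k : ℝ) ^ a < (k : ℝ) ^ (b - a) * (k : ℝ) ^ a := by gcongr; exact hkC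
    _ = (k : ℝ) ^ b := by rw [← Real.rpow_add hk, sub_add_cancel]

section SequenceSpace

variable {𝕜 : Type} [RCLike 𝕜]

lemma lp.orthonormal_single_one {ι : Type*} [DecidableEq ι] :
    Orthonormal 𝕜 fun i : ι => lp.single (E := fun _ : ι => 𝕜) 2 i 1 := by
  rw [orthonormal_iff_ite]
  intro i j
  rw [lp.inner_single_left, lp.single_apply]
  by_cases h : i = j <;> simp [h]

lemma lp.inner_single_one_left {ι : Type*} [DecidableEq ι] (i : ι) (x : ℓ²(ι, 𝕜)) :
    ⟪lp.single 2 i (1 : 𝕜), x⟫_𝕜 = x i := by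
  simp [lp.inner_single_left]

lemma norm_curryLeft_le_of_eq_tsum {d : ℕ → ℝ} {M : ℝ} (hd : ∀ n, |d n| ≤ M)
    {B : ContinuousMultilinearMap 𝕜 (fun _ : Fin 2 => ℓ²(ℕ, 𝕜)) 𝕜}
    (hB : ∀ x : Fin 2 → ℓ²(ℕ, 𝕜),
      B x = ∑' j, d j • ((x 0 : ∀ _ : ℕ, 𝕜) j * (x 1 : ∀ _ : ℕ, 𝕜) j))
    (x : ℓ²(ℕ, 𝕜)) :
    ‖B.curryLeft x‖ ≤ √(∑' n, (d n * ‖x n‖) ^ 2) := by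
  have hwn : ∀ n, ‖(d n : 𝕜) * conj (x n)‖ = |d n| * ‖x n‖ := fun n => by
    rw [norm_mul, RCLike.norm_ofReal, RCLike.norm_conj]
  let w : ℓ²(ℕ, 𝕜) := ⟨fun n => (d n : 𝕜) * conj (x n),
    ((lp.memℓp x).norm.const_mul M).mono fun n => by
      rw [hwn]; exact mul_le_mul_of_nonneg_right (hd n) (norm_nonneg _)⟩
  have hw : ‖w‖ = √(∑' n, (d n * ‖x n‖) ^ 2) := by
    have h := lp.norm_rpow_eq_tsum (p := 2) (by norm_num) w
    simp only [ENNReal.toReal_ofNat, Real.rpow_two] at h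
    rw [← Real.sqrt_sq (norm_nonneg w), h]
    exact congrArg _ (tsum_congr fun n => by
      change ‖(d n : 𝕜) * conj (x n)‖ ^ 2 = _; rw [hwn, mul_pow, sq_abs, mul_pow])
  rw [← hw]
  refine ContinuousMultilinearMap.opNorm_le_bound (norm_nonneg w) fun y => ?_
  have hBw : B.curryLeft x y = ⟪w, y 0⟫_𝕜 := by
    rw [ContinuousMultilinearMap.curryLeft_apply, hB, lp.inner_eq_tsum]
    refine tsum_congr fun n => ?_
    simp only [w, Fin.cons_zero, Fin.cons_one, RCLike.real_smul_eq_coe_mul, RCLike.inner_apply,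
      map_mul, RCLike.conj_conj, RCLike.conj_ofReal]
    ring
  rw [hBw, Fin.prod_univ_one]
  exact norm_inner_le_norm w (y 0)

lemma apply_const_single_of_eq_tsum {d : ℕ → ℝ}
    {B : ContinuousMultilinearMap 𝕜 (fun _ : Fin 2 => ℓ²(ℕ, 𝕜)) 𝕜}
    (hB : ∀ x : Fin 2 → ℓ²(ℕ, 𝕜),
      B x = ∑' j, d j • ((x 0 : ∀ _ : ℕ, 𝕜) j * (x 1 : ∀ _ : ℕ, 𝕜) j))
    (j : ℕ) : B (fun _ => lp.single 2 j 1) = (d j : 𝕜) := by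
  rw [hB, tsum_eq_single j fun n hn => by simp [lp.single_apply, hn]]
  simp [RCLike.real_smul_eq_coe_mul]

lemma summable_rpow_neg_sq {α : ℝ} (hα : 1 / 2 < α) :
    Summable fun n : ℕ => (((n : ℝ) + 1) ^ (-α)) ^ 2 := by
  have h : Summable fun n : ℕ => ((n + 1 : ℕ) : ℝ) ^ (-α * 2) :=
    (summable_nat_add_iff 1).2 (Real.summable_nat_rpow.2 (by linarith))
  refine h.congr fun n => ?_
  push_cast
  exact Real.rpow_mul_natCast (by positivity) _ 2

theorem not_isDominated1_of_norm_apply_single {F : Type} [NormedAddCommGroup F]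
    [NormedSpace 𝕜 F] {α : ℝ} (hα0 : 0 ≤ α) (hα1 : α < 1) {P : ℓ²(ℕ, 𝕜) → F}
    (hP : ∀ j : ℕ, ‖P (lp.single 2 j 1)‖ = ((j : ℝ) + 1) ^ (-α)) : ¬ IsDominated1 𝕜 2 P := by
  intro hdom
  obtain ⟨C, -, hC⟩ := hdom.exists_sum_rpow_le two_ne_zero ℕ
  obtain ⟨k, hk⟩ := exists_nat_mul_rpow_lt_rpow (show (1 : ℝ) / 2 < 1 - α / 2 by linarith) C
  refine hk.not_ge ?_
  have hterm : ∀ j ∈ range k,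
      (k : ℝ) ^ (-(α / 2)) ≤ ‖P (lp.single 2 j 1)‖ ^ ((2 : ℕ) : ℝ)⁻¹ := fun j hj => by
    have hjk : (j : ℝ) + 1 ≤ k := by exact_mod_cast mem_range.1 hj
    rw [hP, ← Real.rpow_mul (by positivity)]
    convert Real.rpow_le_rpow_of_nonpos (by positivity) hjk (by linarith : -(α / 2) ≤ 0)
      using 2
    push_cast
    ring
  calc (k : ℝ) ^ (1 - α / 2) = ∑ j ∈ range k, (k : ℝ) ^ (-(α / 2)) := by
        rw [sum_const, card_range, nsmul_eq_mul, ← Real.rpow_one_add' (Nat.cast_nonneg k)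
          (by linarith), sub_eq_add_neg]
    _ ≤ ∑ j ∈ range k, ‖P (lp.single 2 j 1)‖ ^ ((2 : ℕ) : ℝ)⁻¹ := sum_le_sum hterm
    _ ≤ C * √k := hC (range k) _ √k fun φ hφ => by
        simpa using lp.orthonormal_single_one.sum_norm_apply_le_sqrt_card
          (norm_toStrongDual_le_one hφ) (range k)
    _ = C * (k : ℝ) ^ (1 / 2 : ℝ) := by rw [Real.sqrt_eq_rpow]

end SequenceSpace

theorem type_as_one_not_dominated_general {𝕜 : Type} [RCLike 𝕜]
    (ε : ℝ) (hε0 : 0 < ε) (hε : ε < 1 / 2) (α : ℝ) (hα : α = 1 / 2 + ε)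
    (B : ContinuousMultilinearMap 𝕜 (fun _ : Fin 2 => lp (fun _ : ℕ => 𝕜) 2) 𝕜)
    (hB : ∀ x : Fin 2 → lp (fun _ : ℕ => 𝕜) 2,
      B x = ∑' j : ℕ, ((j + 1 : ℝ) ^ (-α)) •
        ((x 0 : ∀ _ : ℕ, 𝕜) j * (x 1 : ∀ _ : ℕ, 𝕜) j)) :
    IsSumming1 𝕜 ⇑B.curryLeft ∧
    ¬ IsDominated1 𝕜 2 (fun x => B fun _ => x) := by
  have hweight : ∀ n : ℕ, |((n : ℝ) + 1) ^ (-α)| ≤ 1 := fun n => by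
    rw [abs_of_pos (by positivity)]
    exact Real.rpow_le_one_of_one_le_of_nonpos (by simp) (by linarith)
  refine ⟨isSumming1_of_norm_le_sqrt_tsum lp.orthonormal_single_one
    (summable_rpow_neg_sq (α := α) (by linarith)) fun x => ?_,
    not_isDominated1_of_norm_apply_single (by linarith) (by linarith) fun j => ?_⟩
  · simpa only [lp.inner_single_one_left] using norm_curryLeft_le_of_eq_tsum hweight hB x
  · rw [apply_const_single_of_eq_tsum hB, RCLike.norm_ofReal, abs_of_pos (by positivity)]

/-- For the 2-homogeneous polynomial `P(x) = Σ_j (j+1)^{-α} x_j²` on `ℓ²` with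
`α = 1/2 + ε`, `0 < ε < 1/2`: the linearization `Ψ₁(P̌)` of its symmetric bilinear form is
absolutely 1-summing (so `P` is of type `[as,1]`), while `P` is not 1-dominated. Hence the
class of polynomials of type `[as,1]` strictly contains the 1-dominated polynomials. -/
theorem type_as_one_not_dominated {𝕜 : Type} [RCLike 𝕜]
    (ε : ℝ) (hε0 : 0 < ε) (hε : ε < 1 / 2) (α : ℝ) (hα : α = 1 / 2 + ε)
    (B : ContinuousMultilinearMap 𝕜 (fun _ : Fin 2 => lp (fun _ : ℕ => 𝕜) 2) 𝕜)
    (hBsym : ∀ x : Fin 2 → lp (fun _ : ℕ => 𝕜) 2, B (fun i => x (1 - i)) = B x)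
    (hB : ∀ x : Fin 2 → lp (fun _ : ℕ => 𝕜) 2,
      B x = ∑' j : ℕ, ((j + 1 : ℝ) ^ (-α)) •
        ((x 0 : ∀ _ : ℕ, 𝕜) j * (x 1 : ∀ _ : ℕ, 𝕜) j)) :
    IsSumming1 𝕜 ⇑B.curryLeft ∧
    ¬ IsDominated1 𝕜 2 (fun x => B fun _ => x) :=
  type_as_one_not_dominated_general ε hε0 hε α hα B hB
end
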